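/- arXiv:1811.09092 — 10 statements merged into one kernel-verified Lean document; each statement's English description precedes it below -/
import Mathlib

section
/- Let K be a field in which -1 is not a square, and let D be a subring of K such that 1/(1+x^2) ∈ D for every x ∈ K (a Dress ring). Then for all a, b ∈ D, the square of the ideal of D generated by a and b equals the principal ideal generated by a^2 + b^2; that is, (Ideal.span {a,b})^2 = Ideal.span {a^2 + b^2} as ideals of D. -/
/-!
Write `s = a² + b²`. Every product of two generators of `(a, b)` is a multiple of `s` in `D`,
because for `u, v ∈ K` the quotients `u² / (u² + v²) = 1 / (1 + (v/u)²)` and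
`u v / (u² + v²) = w / (1 + w²)` with `w = v/u` lie in `D`. The second needs
`w / (1 + w²) = 1/2 - 1 / (1 + y²)` for the Cayley transform `y = (1 + w) / (1 - w)`.
Conversely `s = a·a + b·b` lies in `(a, b)²`. Since `-1` is not a square, `s = 0` only when
`a = b = 0`, so the quotients really witness divisibility.
-/

namespace Ideal

variable {R : Type*} [CommRing R]

theorem span_pair_sq_le_span_singleton {a b s : R} (ha : s ∣ a ^ 2) (hab : s ∣ a * b)
    (hb : s ∣ b ^ 2) : span {a, b} ^ 2 ≤ span {s} := by
  rw [sq, span_pair_mul_span_pair, span_le]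
  rw [sq] at ha hb
  have hba : s ∣ b * a := mul_comm a b ▸ hab
  simp only [Set.insert_subset_iff, Set.singleton_subset_iff, SetLike.mem_coe,
    mem_span_singleton]
  exact ⟨ha, hab, hba, hb⟩

theorem sq_add_sq_mem_span_pair_sq (a b : R) : a ^ 2 + b ^ 2 ∈ span {a, b} ^ 2 := by
  have ha : a ∈ span ({a, b} : Set R) := subset_span (by simp)
  have hb : b ∈ span ({a, b} : Set R) := subset_span (by simp)
  rw [sq, sq, sq]
  exact add_mem (mul_mem_mul ha ha) (mul_mem_mul hb hb)

end Ideal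

section NegOneNotSquare

variable {K : Type*} [Field K]

theorem one_add_sq_ne_zero (hK : ¬ IsSquare (-1 : K)) (x : K) : 1 + x ^ 2 ≠ 0 :=
  fun hx => hK ⟨x, by linear_combination -hx⟩

theorem eq_zero_of_sq_add_sq_eq_zero (hK : ¬ IsSquare (-1 : K)) {u v : K}
    (h : u ^ 2 + v ^ 2 = 0) : u = 0 := by
  by_contra hu
  refine one_add_sq_ne_zero hK (v / u) ?_
  field_simp
  linear_combination h

end NegOneNotSquare

namespace Subring

variable {K : Type*} [Field K]

def IsDress (D : Subring K) : Prop :=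
  ∀ x : K, (1 + x ^ 2)⁻¹ ∈ D

theorem dvd_of_div_mem {D : Subring K} {s t : D} (hs : (s : K) ≠ 0) (h : (t : K) / s ∈ D) :
    s ∣ t :=
  ⟨⟨t / s, h⟩, Subtype.ext (mul_div_cancel₀ (t : K) hs).symm⟩

namespace IsDress

variable {D : Subring K}

theorem sq_div_sq_add_sq_mem (hD : D.IsDress) (u v : K) : u ^ 2 / (u ^ 2 + v ^ 2) ∈ D := by
  rcases eq_or_ne u 0 with rfl | hu
  · simp
  · convert hD (v / u) using 1
    field_simp

theorem div_one_add_sq_mem (hK : ¬ IsSquare (-1 : K)) (hD : D.IsDress) (w : K) :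
    w / (1 + w ^ 2) ∈ D := by
  have h2 : (2 : K) ≠ 0 := by simpa [one_add_one_eq_two] using one_add_sq_ne_zero hK 1
  have hw := one_add_sq_ne_zero hK w
  rcases eq_or_ne w 1 with rfl | hw1
  · simpa using hD 1
  · have hw1' : 1 - w ≠ 0 := sub_ne_zero.mpr hw1.symm
    have hcayley : w / (1 + w ^ 2) = (1 + 1 ^ 2)⁻¹ - (1 + ((1 + w) / (1 - w)) ^ 2)⁻¹ := by
      have hy : 1 + ((1 + w) / (1 - w)) ^ 2 = 2 * (1 + w ^ 2) / (1 - w) ^ 2 := by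
        field_simp
        ring
      rw [hy, one_pow, one_add_one_eq_two]
      field_simp
      ring
    rw [hcayley]
    exact sub_mem (hD 1) (hD _)

theorem mul_div_sq_add_sq_mem (hK : ¬ IsSquare (-1 : K)) (hD : D.IsDress) (u v : K) :
    u * v / (u ^ 2 + v ^ 2) ∈ D := by
  rcases eq_or_ne u 0 with rfl | hu
  · simp
  · convert hD.div_one_add_sq_mem hK (v / u) using 1
    field_simp

theorem sq_add_sq_dvd (hK : ¬ IsSquare (-1 : K)) (hD : D.IsDress) (a b : D) :
    a ^ 2 + b ^ 2 ∣ a ^ 2 ∧ a ^ 2 + b ^ 2 ∣ a * b ∧ a ^ 2 + b ^ 2 ∣ b ^ 2 := by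
  have hs : ((a ^ 2 + b ^ 2 : D) : K) = (a : K) ^ 2 + (b : K) ^ 2 := by push_cast; rfl
  rcases eq_or_ne ((a ^ 2 + b ^ 2 : D) : K) 0 with hs0 | hs0
  · rw [hs] at hs0
    have ha : a = 0 := Subtype.ext (eq_zero_of_sq_add_sq_eq_zero hK hs0)
    have hb : b = 0 := Subtype.ext (eq_zero_of_sq_add_sq_eq_zero hK ((add_comm _ _).trans hs0))
    simp [ha, hb]
  · refine ⟨dvd_of_div_mem hs0 ?_, dvd_of_div_mem hs0 ?_, dvd_of_div_mem hs0 ?_⟩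
    · simpa [hs] using hD.sq_div_sq_add_sq_mem (a : K) b
    · simpa [hs] using hD.mul_div_sq_add_sq_mem hK (a : K) b
    · simpa [hs, add_comm] using hD.sq_div_sq_add_sq_mem (b : K) a

end IsDress

end Subring

/-- If `K` is a field in which `-1` is not a square and `D` is a
Dress ring in `K` (a subring containing `1/(1+x^2)` for every `x ∈ K`), then for all
`a, b ∈ D` the square of the ideal `(a, b)` of `D` is the principal ideal `(a² + b²)`. -/
theorem dress_ring_span_pair_sq (K : Type*) [Field K] (hK : ¬ IsSquare (-1 : K))
    (D : Subring K) (hD : ∀ x : K, ((1 + x ^ 2)⁻¹ : K) ∈ D) (a b : D) :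
    (Ideal.span {a, b}) ^ 2 = Ideal.span {a ^ 2 + b ^ 2} := by
  obtain ⟨ha, hab, hb⟩ := Subring.IsDress.sq_add_sq_dvd hK hD a b
  exact le_antisymm (Ideal.span_pair_sq_le_span_singleton ha hab hb)
    ((Ideal.span_singleton_le_iff_mem _).2 (Ideal.sq_add_sq_mem_span_pair_sq a b))
end

section
/- Let K be a field in which -1 is not a square, and let D_K be the minimal Dress ring of K, i.e., the subring of K generated by the set {(1+x^2)⁻¹ : x ∈ K}. Then D_K equals the intersection of all valuation subrings V of K such that -1 is not a square in the residue field of V. Equivalently, for z ∈ K: z ∈ D_K if and only if z ∈ V for every valuation subring V of K whose residue field does not contain a square root of -1. -/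
/-!
A valuation ring `V` has no square root of `-1` in its residue field exactly when `1 + r ^ 2` is a
unit of `V` for every `r ∈ V`; since `(1 + x ^ 2)⁻¹ = x⁻² (1 + x⁻²)⁻¹`, such a `V` contains every
`(1 + x ^ 2)⁻¹`, hence `D_K`. Conversely, with `b = (1 + k ^ 2)⁻¹` both `b k` and `(1 - b) k⁻¹`
equal `k / (1 + k ^ 2)`, which lies in `D_K`. As `b` and `1 - b` cannot both lie in a prime `p` of
`D_K`, every localization of `D_K` at a prime is a valuation ring, and its residue field inherits
the property above from `D_K`. An element `z ∉ D_K` is missed by the localization at a maximal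
ideal containing the conductor `{d | d z ∈ D_K}`.
-/

namespace IsLocalRing

theorem not_isSquare_neg_one_residueField_iff {R : Type*} [CommRing R] [IsLocalRing R] :
    ¬ IsSquare (-1 : ResidueField R) ↔ ∀ r : R, 1 + r ^ 2 ∉ maximalIdeal R := by
  simp only [← residue_eq_zero_iff, map_add, map_one, map_pow, IsSquare,
    residue_surjective.exists, not_exists]
  refine forall_congr' fun r => not_congr ⟨fun h => ?_, fun h => ?_⟩ <;>
    linear_combination -h

end IsLocalRing

namespace ValuationSubring

variable {K : Type*} [Field K] (V : ValuationSubring K)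

theorem not_isSquare_neg_one_residueField_iff :
    ¬ IsSquare (-1 : IsLocalRing.ResidueField V) ↔
      ∀ r ∈ V, 1 + r ^ 2 ≠ 0 ∧ (1 + r ^ 2)⁻¹ ∈ V := by
  rw [IsLocalRing.not_isSquare_neg_one_residueField_iff, Subtype.forall]
  refine forall₂_congr fun r hr => ?_
  rw [← coe_mem_nonunits_iff, mem_nonunits_iff_or]
  push Not
  rfl

theorem inv_one_add_sq_mem (h : ∀ r ∈ V, (1 + r ^ 2)⁻¹ ∈ V) (x : K) : (1 + x ^ 2)⁻¹ ∈ V := by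
  by_cases hx : x ∈ V
  · exact h x hx
  have hx0 : x ≠ 0 := by rintro rfl; exact hx V.zero_mem
  have hxinv : x⁻¹ ∈ V := (V.mem_or_inv_mem x).resolve_left hx
  have key : (1 + x ^ 2)⁻¹ = x⁻¹ ^ 2 * (1 + x⁻¹ ^ 2)⁻¹ := by
    rw [inv_pow, ← mul_inv, mul_add, mul_one, mul_inv_cancel₀ (pow_ne_zero 2 hx0), add_comm]
  rw [key]
  exact V.mul_mem _ _ (V.pow_mem hxinv 2) (h _ hxinv)

end ValuationSubring

namespace Subring

variable {K : Type*} [Field K] (A : Subring K)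

def localization (S : Submonoid A) : Subring K where
  carrier := {k | ∃ s ∈ S, (s : K) * k ∈ A}
  one_mem' := ⟨1, S.one_mem, by simp⟩
  zero_mem' := ⟨1, S.one_mem, by simp⟩
  add_mem' := by
    rintro a b ⟨s, hs, hsa⟩ ⟨t, ht, htb⟩
    refine ⟨s * t, S.mul_mem hs ht, ?_⟩
    have : ((s * t : A) : K) * (a + b) = t * (s * a) + s * (t * b) := by push_cast; ring
    rw [this]
    exact A.add_mem (A.mul_mem t.2 hsa) (A.mul_mem s.2 htb)
  neg_mem' := by
    rintro a ⟨s, hs, hsa⟩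
    exact ⟨s, hs, by simpa only [mul_neg] using A.neg_mem hsa⟩
  mul_mem' := by
    rintro a b ⟨s, hs, hsa⟩ ⟨t, ht, htb⟩
    refine ⟨s * t, S.mul_mem hs ht, ?_⟩
    have : ((s * t : A) : K) * (a * b) = (s * a) * (t * b) := by push_cast; ring
    rw [this]
    exact A.mul_mem hsa htb

theorem le_localization (S : Submonoid A) : A ≤ A.localization S :=
  fun a ha => ⟨1, S.one_mem, by simpa using ha⟩

theorem mem_or_inv_mem_localization_primeCompl
    (h : ∀ k : K, ∃ b ∈ A, b * k ∈ A ∧ (1 - b) * k⁻¹ ∈ A) (p : Ideal A) [p.IsPrime] (k : K) :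
    k ∈ A.localization p.primeCompl ∨ k⁻¹ ∈ A.localization p.primeCompl := by
  obtain ⟨b, hb, hbk, hbk'⟩ := h k
  by_cases hbp : (⟨b, hb⟩ : A) ∈ p
  · have h1b : 1 - (⟨b, hb⟩ : A) ∉ p := fun h1b =>
      p.primeCompl.one_mem (by simpa using p.add_mem h1b hbp)
    exact Or.inr ⟨_, h1b, by simpa using hbk'⟩
  · exact Or.inl ⟨_, hbp, hbk⟩

theorem exists_isMaximal_notMem_localization {z : K} (hz : z ∉ A) :
    ∃ (m : Ideal A) (_ : m.IsMaximal), z ∉ A.localization m.primeCompl := by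
  let conductor : Ideal A :=
    { carrier := {d | (d : K) * z ∈ A}
      add_mem' := fun {a b} ha hb => by
        change ((a + b : A) : K) * z ∈ A
        simpa only [coe_add, add_mul] using A.add_mem ha hb
      zero_mem' := by
        change ((0 : A) : K) * z ∈ A
        simpa only [coe_zero, zero_mul] using A.zero_mem
      smul_mem' := fun c d hd => by
        change ((c * d : A) : K) * z ∈ A
        simpa only [coe_mul, mul_assoc] using A.mul_mem c.2 hd }
  have hne : conductor ≠ ⊤ := fun htop => hz <| by
    simpa [conductor] using (Ideal.eq_top_iff_one _).1 htop
  obtain ⟨m, hm, hle⟩ := Ideal.exists_le_maximal conductor hne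
  exact ⟨m, hm, fun ⟨s, hs, hsz⟩ => hs (hle hsz)⟩

end Subring

def minimalDressRing (K : Type*) [Field K] : Subring K :=
  Subring.closure {r : K | ∃ x : K, r = (1 + x ^ 2)⁻¹}

section minimalDressRing

variable {K : Type*} [Field K]

theorem inv_one_add_sq_mem_minimalDressRing (x : K) : (1 + x ^ 2)⁻¹ ∈ minimalDressRing K :=
  Subring.subset_closure ⟨x, rfl⟩

theorem minimalDressRing_le {V : ValuationSubring K} (h : ∀ r ∈ V, (1 + r ^ 2)⁻¹ ∈ V) :
    minimalDressRing K ≤ V.toSubring :=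
  Subring.closure_le.2 fun _ ⟨x, hx⟩ => hx ▸ V.inv_one_add_sq_mem h x

/-- With `t = (k - 1) / (k + 1)` one has `k / (1 + k ^ 2) = (1 + t ^ 2)⁻¹ - (1 + 1 ^ 2)⁻¹`. -/
theorem div_one_add_sq_mem_minimalDressRing (hK : ¬ IsSquare (-1 : K)) (k : K) :
    k / (1 + k ^ 2) ∈ minimalDressRing K := by
  by_cases hk : k = -1
  · have : k / (1 + k ^ 2) = -(1 + 1 ^ 2)⁻¹ := by subst hk; ring
    rw [this]
    exact neg_mem (inv_one_add_sq_mem_minimalDressRing 1)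
  have hk1 : k + 1 ≠ 0 := fun h => hk (by linear_combination h)
  have h2 : (2 : K) ≠ 0 := by simpa [one_add_one_eq_two] using one_add_sq_ne_zero hK 1
  have hk2 : 1 + k ^ 2 ≠ 0 := one_add_sq_ne_zero hK k
  have key : k / (1 + k ^ 2) = (1 + ((k - 1) / (k + 1)) ^ 2)⁻¹ - (1 + 1 ^ 2)⁻¹ := by
    have ht : 1 + ((k - 1) / (k + 1)) ^ 2 = 2 * (1 + k ^ 2) / (k + 1) ^ 2 := by
      field_simp
      ring
    rw [ht, inv_div, one_pow, one_add_one_eq_two]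
    field_simp
    ring
  rw [key]
  exact sub_mem (inv_one_add_sq_mem_minimalDressRing _) (inv_one_add_sq_mem_minimalDressRing 1)

theorem mem_or_inv_mem_localization_minimalDressRing (hK : ¬ IsSquare (-1 : K))
    (p : Ideal (minimalDressRing K)) [p.IsPrime] (k : K) :
    k ∈ (minimalDressRing K).localization p.primeCompl ∨
      k⁻¹ ∈ (minimalDressRing K).localization p.primeCompl := by
  refine (minimalDressRing K).mem_or_inv_mem_localization_primeCompl (fun k => ?_) p k
  refine ⟨_, inv_one_add_sq_mem_minimalDressRing k, ?_, ?_⟩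
  · simpa only [inv_mul_eq_div] using div_one_add_sq_mem_minimalDressRing hK k
  · have : (1 - (1 + k ^ 2)⁻¹) * k⁻¹ = k / (1 + k ^ 2) := by
      rcases eq_or_ne k 0 with rfl | hk0
      · simp
      field_simp [one_add_sq_ne_zero hK k]
      ring
    simpa only [this] using div_one_add_sq_mem_minimalDressRing hK k

end minimalDressRing

/-- The minimal Dress ring of a field `K` (with `-1` not a square in `K`)
is the intersection of the valuation subrings of `K` whose residue field does not contain
a square root of `-1`. -/
theorem minimalDressRing_eq_iInter_valuationSubrings (K : Type*) [Field K]
    (hK : ¬ IsSquare (-1 : K)) (z : K) :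
    z ∈ Subring.closure {r : K | ∃ x : K, r = (1 + x ^ 2)⁻¹} ↔
      ∀ V : ValuationSubring K,
        ¬ IsSquare (-1 : IsLocalRing.ResidueField V) → z ∈ V := by
  change z ∈ minimalDressRing K ↔ _
  constructor
  · intro hz V hV
    rw [V.not_isSquare_neg_one_residueField_iff] at hV
    exact minimalDressRing_le (fun r hr => (hV r hr).2) hz
  · intro hz
    by_contra hzD
    obtain ⟨m, _, hzm⟩ := (minimalDressRing K).exists_isMaximal_notMem_localization hzD
    let V := ValuationSubring.ofSubring _ (mem_or_inv_mem_localization_minimalDressRing hK m)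
    refine hzm (hz V ((V.not_isSquare_neg_one_residueField_iff).2 fun r _ => ?_))
    exact ⟨one_add_sq_ne_zero hK r,
      (minimalDressRing K).le_localization _ (inv_one_add_sq_mem_minimalDressRing r)⟩
end

section
/- Let K be a field and V a valuation subring of K such that V (as a local ring) is Henselian. Suppose there exists a ring homomorphism φ from the residue field of V to ℝ such that every element a of the residue field with φ(a) > 0 is a square in the residue field. Then V equals the minimal Dress ring of K; that is, V (viewed as a subring of K) equals the subring of K generated by {(1+x^2)⁻¹ : x ∈ K}. -/
open IsLocalRing Polynomial

section aux
variable {K : Type*} [Field K] (V : ValuationSubring K)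

lemma aux_isUnit (w : V) (hw : residue V w ≠ 0) : IsUnit w := by
  by_contra h
  exact hw (Ideal.Quotient.eq_zero_iff_mem.mpr ((mem_maximalIdeal _).mpr h))

lemma aux_inv_mem (w : V) (hw : residue V w ≠ 0) : ((w : K))⁻¹ ∈ V := by
  obtain ⟨u, rfl⟩ := aux_isUnit V w hw
  have h1 : ((↑(u⁻¹ : Vˣ) : V) : K) * ((u : V) : K) = 1 := by
    rw [← Subring.coe_mul]
    norm_cast
    simp
  rw [inv_eq_of_mul_eq_one_left h1]
  exact ((u⁻¹ : Vˣ) : V).2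

lemma aux_mem_closure [HenselianLocalRing V]
    (φ : IsLocalRing.ResidueField V →+* ℝ)
    (hφ : ∀ a : IsLocalRing.ResidueField V, 0 < φ a → IsSquare a) (v : V) :
    (v : K) ∈ Subring.closure {r : K | ∃ x : K, r = (1 + x ^ 2)⁻¹} := by
  set ψ : V →+* ℝ := φ.comp (residue V) with hψ
  obtain ⟨n, hn⟩ := exists_nat_gt (-ψ v)
  set u : V := v + n with hudef
  have hs : 0 < ψ u := by
    have : ψ u = ψ v + n := by simp [hudef]
    linarith
  obtain ⟨m, hm⟩ := exists_nat_gt (ψ u)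
  have hune : residue V u ≠ 0 := by
    intro h
    rw [hψ, RingHom.comp_apply, h, map_zero] at hs
    exact lt_irrefl 0 hs
  have hu : IsUnit u := aux_isUnit V u hune
  set c : V := ((m : V) - u) * ↑hu.unit⁻¹ with hcdef
  have hinvu : (↑hu.unit⁻¹ : V) * u = 1 := hu.val_inv_mul
  have hψc : ψ c = ((m : ℝ) - ψ u) * (ψ u)⁻¹ := by
    rw [hcdef, map_mul, map_sub, map_natCast, map_units_inv, hu.unit_spec]
  have hc : 0 < ψ c := by
    rw [hψc]
    exact mul_pos (by linarith) (inv_pos.mpr hs)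
  obtain ⟨t, ht⟩ := hφ (residue V c) (by simpa [hψ] using hc)
  obtain ⟨b, rfl⟩ := residue_surjective t
  have hmon : (X ^ 2 - C c).Monic := monic_X_pow_sub_C c (by norm_num)
  have h1 : eval b (X ^ 2 - C c) ∈ maximalIdeal V := by
    have heval : eval b (X ^ 2 - C c) = b ^ 2 - c := by simp
    rw [heval]
    have hres : residue V (b ^ 2 - c) = 0 := by
      rw [map_sub, map_pow, ht]; ring
    exact Ideal.Quotient.eq_zero_iff_mem.mp hres
  have hb : residue V b ≠ 0 := by
    intro h
    have h0 : ψ c = 0 := by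
      rw [hψ, RingHom.comp_apply, ht, h, mul_zero, map_zero]
    linarith
  have h2ne : (2 : ResidueField V) ≠ 0 := by
    intro h
    have h2 : φ (2 : ResidueField V) = 2 := map_ofNat φ 2
    rw [h, map_zero] at h2
    norm_num at h2
  have h2 : IsUnit (eval b (derivative (X ^ 2 - C c))) := by
    apply aux_isUnit
    have hd : eval b (derivative (X ^ 2 - C c)) = 2 * b := by
      simp [derivative_sub, derivative_X_pow, one_add_one_eq_two]
    rw [hd, map_mul]
    refine mul_ne_zero ?_ hb
    have : residue V (2 : V) = (2 : ResidueField V) := map_ofNat _ 2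
    rw [this]
    exact h2ne
  obtain ⟨a, ha, -⟩ := HenselianLocalRing.is_henselian (X ^ 2 - C c) hmon b h1 h2
  have ha2 : a ^ 2 = c := by
    have h := ha
    simp only [IsRoot, eval_sub, eval_pow, eval_X, eval_C] at h
    exact sub_eq_zero.mp h
  have hkey : (1 + a ^ 2) * u = (m : V) := by
    rw [ha2, hcdef, add_mul, one_mul, mul_assoc, hinvu, mul_one]
    ring
  have hmpos : 0 < m := by
    have : (0 : ℝ) < m := lt_trans hs hm
    exact_mod_cast this
  have hkeyK : (1 + (a : K) ^ 2) * (u : K) = (m : K) := by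
    have := congrArg (Subtype.val) hkey
    push_cast at this
    exact this
  have hmne : (m : K) ≠ 0 := by
    intro h
    have hmK : ((m : V) : K) = 0 := by push_cast; exact h
    have hm0 : (m : V) = (0 : V) := Subtype.coe_injective (by simpa using hmK)
    have h0 : ψ (m : V) = 0 := by rw [hm0, map_zero]
    rw [map_natCast] at h0
    have : (0 : ℝ) < m := by exact_mod_cast hmpos
    linarith
  have hdne : (1 + (a : K) ^ 2) ≠ 0 := by
    intro h
    rw [h, zero_mul] at hkeyK
    exact hmne hkeyK.symm
  have huK : (u : K) = (m : K) * (1 + (a : K) ^ 2)⁻¹ := by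
    field_simp
    linear_combination hkeyK
  have humem : (u : K) ∈ Subring.closure {r : K | ∃ x : K, r = (1 + x ^ 2)⁻¹} := by
    rw [huK]
    exact Subring.mul_mem _ (natCast_mem _ m)
      (Subring.subset_closure ⟨(a : K), rfl⟩)
  have hv : (v : K) = (u : K) - (n : K) := by
    rw [hudef]; push_cast; ring
  rw [hv]
  exact Subring.sub_mem _ humem (natCast_mem _ n)

end aux

section aux2
variable {K : Type*} [Field K] (V : ValuationSubring K)

lemma aux_res_one_add_sq_ne (φ : IsLocalRing.ResidueField V →+* ℝ) (z : V) :
    residue V (1 + z ^ 2) ≠ 0 := by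
  intro h
  have h0 : φ (residue V (1 + z ^ 2)) = 0 := by rw [h, map_zero]
  rw [map_add, map_one, map_pow, map_add, map_one, map_pow] at h0
  nlinarith [sq_nonneg (φ (residue V z))]

end aux2

/-- Let `V` be a Henselian valuation subring of a field `K` whose residue
field admits a ring homomorphism `φ` to `ℝ` such that every element of the residue field
with positive image under `φ` is a square.  Then `V` is the minimal Dress ring of `K`. -/
theorem henselian_valuationSubring_eq_minimalDressRing (K : Type*) [Field K]
    (V : ValuationSubring K) [HenselianLocalRing V]
    (φ : IsLocalRing.ResidueField V →+* ℝ)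
    (hφ : ∀ a : IsLocalRing.ResidueField V, 0 < φ a → IsSquare a) :
    V.toSubring = Subring.closure {r : K | ∃ x : K, r = (1 + x ^ 2)⁻¹} := by
  apply le_antisymm
  · intro y hy
    exact aux_mem_closure V φ hφ ⟨y, hy⟩
  · rw [Subring.closure_le]
    rintro r ⟨x, rfl⟩
    rcases V.mem_or_inv_mem x with hx | hx
    · have h := aux_inv_mem V (1 + (⟨x, hx⟩ : V) ^ 2)
        (aux_res_one_add_sq_ne V φ _)
      have hcast : ((1 + (⟨x, hx⟩ : V) ^ 2 : V) : K) = 1 + x ^ 2 := by push_cast; rfl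
      rw [hcast] at h
      exact h
    · by_cases hx0 : x = 0
      · subst hx0
        norm_num
      · set y : V := ⟨x⁻¹, hx⟩ with hydef
        have h := aux_inv_mem V (1 + y ^ 2) (aux_res_one_add_sq_ne V φ _)
        have hcast : ((1 + y ^ 2 : V) : K) = 1 + (x⁻¹) ^ 2 := by
          rw [hydef]; push_cast; rfl
        rw [hcast] at h
        have hident : (1 + x ^ 2)⁻¹ = (x⁻¹) ^ 2 * (1 + (x⁻¹) ^ 2)⁻¹ := by
          rw [inv_pow, ← mul_inv]
          congr 1
          field_simp
          ring
        have hy2 : ((x⁻¹) ^ 2 : K) ∈ V := Subring.pow_mem _ hx 2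
        rw [SetLike.mem_coe, hident]
        exact Subring.mul_mem _ hy2 h
end

section
/- Let K = ℝ(X) be the field of rational functions in one variable over ℝ. Then the minimal Dress ring D_K of K equals the Schülting ring R_K, i.e., the intersection of all valuation subrings V of K whose residue field is formally real. Equivalently, for every valuation subring V of K containing D_K, the residue field of V is formally real. -/
/-- A field (or commutative ring) `F` is formally real if `1 + x₁² + ⋯ + xₘ² ≠ 0`
for every finite family `x₁, …, xₘ` of elements of `F`. -/
def FormallyReal (F : Type*) [Field F] : Prop :=
  ∀ (m : ℕ) (x : Fin m → F), 1 + ∑ i, (x i) ^ 2 ≠ 0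

open Polynomial Filter

noncomputable section

namespace DressProof


local notation "am" => algebraMap (Polynomial ℝ) (RatFunc ℝ)

def Dgen : Set (RatFunc ℝ) := {r | ∃ x : RatFunc ℝ, r = (1 + x ^ 2)⁻¹}

abbrev DR : Subring (RatFunc ℝ) := Subring.closure Dgen

lemma sos_poly {m : ℕ} (p : Fin m → Polynomial ℝ) (h : ∑ i, (p i) ^ 2 = 0) :
    ∀ i, p i = 0 := by
  have hev : ∀ (t : ℝ) i, (p i).eval t = 0 := by
    intro t i
    have h0 : ∑ i, ((p i).eval t) ^ 2 = 0 := by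
      have := congrArg (Polynomial.eval t) h
      simpa [Polynomial.eval_finset_sum] using this
    have h1 : ((p i).eval t) ^ 2 = 0 :=
      (Finset.sum_eq_zero_iff_of_nonneg (fun i _ => sq_nonneg _)).mp h0 i (Finset.mem_univ i)
    exact (pow_eq_zero_iff two_ne_zero).mp h1
  intro i
  apply Polynomial.funext
  intro t
  simp [hev t i]

lemma clear_denoms {m : ℕ} (x : Fin m → RatFunc ℝ) :
    ∃ (d : Polynomial ℝ) (P : Fin m → Polynomial ℝ), d ≠ 0 ∧ ∀ i, x i * am d = am (P i) := by
  refine ⟨∏ j, (x j).denom, fun i => (x i).num * ∏ j ∈ Finset.univ.erase i, (x j).denom,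
    Finset.prod_ne_zero_iff.mpr (fun j _ => RatFunc.denom_ne_zero _), fun i => ?_⟩
  rw [← Finset.mul_prod_erase _ _ (Finset.mem_univ i), map_mul, map_mul, ← mul_assoc]
  congr 1
  have h1 := RatFunc.num_div_denom (x i)
  rw [div_eq_iff (RatFunc.algebraMap_ne_zero (RatFunc.denom_ne_zero _))] at h1
  linear_combination -h1

lemma one_add_sos_ne_zero {m : ℕ} (x : Fin m → RatFunc ℝ) : 1 + ∑ i, (x i) ^ 2 ≠ 0 := by
  intro h
  obtain ⟨d, P, hd, hP⟩ := clear_denoms x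
  have key : (d ^ 2 + ∑ i, (P i) ^ 2 : Polynomial ℝ) = 0 := by
    apply RatFunc.algebraMap_injective
    rw [map_zero, map_add, map_pow, map_sum]
    simp only [map_pow]
    have : ∀ i ∈ Finset.univ, (am (P i)) ^ 2 = (x i) ^ 2 * (am d) ^ 2 := by
      intro i _
      rw [← hP i, mul_pow]
    rw [Finset.sum_congr rfl this, ← Finset.sum_mul]
    have h2 : (∑ i, (x i) ^ 2) = -1 := by linear_combination h
    rw [h2]
    ring
  have hall := sos_poly (Fin.cons d P) ?_
  · have := hall 0
    rw [Fin.cons_zero] at this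
    exact hd this
  · rw [Fin.sum_univ_succ]
    simpa using key




lemma one_add_sq_ne_zero (x : RatFunc ℝ) : 1 + x ^ 2 ≠ 0 := by
  have := one_add_sos_ne_zero ![x]
  simpa using this


lemma inv_one_add_sq_mem_V (V : ValuationSubring (RatFunc ℝ))
    (hV : FormallyReal (IsLocalRing.ResidueField V)) (x : RatFunc ℝ) :
    (1 + x ^ 2)⁻¹ ∈ V := by
  have main : ∀ x : RatFunc ℝ, ∀ hx : x ∈ V, (1 + x ^ 2)⁻¹ ∈ V := by
    intro x hx
    set u : V := 1 + (⟨x, hx⟩ : V) ^ 2 with hu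
    have hru : IsLocalRing.residue V u = 1 + (IsLocalRing.residue V ⟨x, hx⟩) ^ 2 := by
      rw [hu, map_add, map_one, map_pow]
    have hne : IsLocalRing.residue V u ≠ 0 := by
      rw [hru]
      have := hV 1 ![IsLocalRing.residue V ⟨x, hx⟩]
      simpa [Fin.sum_univ_one] using this
    have hunit : IsUnit u := by
      by_contra hn
      exact hne ((IsLocalRing.residue_eq_zero_iff _).mpr
        ((IsLocalRing.mem_maximalIdeal _).mpr hn))
    obtain ⟨w, hw⟩ := hunit.exists_right_inv
    have hval : (1 + x ^ 2) * (w : RatFunc ℝ) = 1 := by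
      have := congrArg (Subtype.val) hw
      simpa [hu] using this
    rw [inv_eq_of_mul_eq_one_right hval]
    exact w.2
  rcases V.mem_or_inv_mem x with hx | hx
  · exact main x hx
  · by_cases h0 : x = 0
    · simp only [h0, ne_eq, OfNat.ofNat_ne_zero, not_false_eq_true, zero_pow, add_zero, inv_one]
      exact one_mem V
    · have h1 : (1 + (x⁻¹) ^ 2)⁻¹ ∈ V := main _ hx
      have h2 : (x⁻¹) ^ 2 ∈ V := pow_mem hx 2
      have key : (1 + x ^ 2)⁻¹ = (x⁻¹) ^ 2 * (1 + (x⁻¹) ^ 2)⁻¹ := by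
        have hx2 := one_add_sq_ne_zero x
        have hxi2 := one_add_sq_ne_zero x⁻¹
        field_simp
        have hc : (1 + x ^ 2) * (1 + x ^ 2)⁻¹ = 1 := mul_inv_cancel₀ hx2
        linear_combination -hc
      rw [key]
      exact mul_mem h2 h1

lemma forward {z : RatFunc ℝ}
    (hz : z ∈ Subring.closure {r : RatFunc ℝ | ∃ x : RatFunc ℝ, r = (1 + x ^ 2)⁻¹})
    (V : ValuationSubring (RatFunc ℝ))
    (hV : FormallyReal (IsLocalRing.ResidueField V)) : z ∈ V := by
  induction hz using Subring.closure_induction with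
  | mem x hx => obtain ⟨y, rfl⟩ := hx; exact inv_one_add_sq_mem_V V hV y
  | zero => exact zero_mem V
  | one => exact one_mem V
  | add x y _ _ hx hy => exact add_mem hx hy
  | neg x _ hx => exact neg_mem hx
  | mul x y _ _ hx hy => exact mul_mem hx hy





lemma eval₂_id (a : ℝ) (p : Polynomial ℝ) :
    Polynomial.eval₂ (RingHom.id ℝ) a p = p.eval a := rfl

/-- The valuation subring of rational functions defined at a point `a`. -/
def Vpt (a : ℝ) : ValuationSubring (RatFunc ℝ) where
  carrier := {f | ∃ p q : Polynomial ℝ, q.eval a ≠ 0 ∧ f = am p / am q}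
  zero_mem' := ⟨0, 1, by simp, by simp⟩
  one_mem' := ⟨1, 1, by simp, by simp⟩
  add_mem' := by
    rintro f g ⟨p, q, hq, rfl⟩ ⟨p', q', hq', rfl⟩
    refine ⟨p * q' + p' * q, q * q', by simp [hq, hq'], ?_⟩
    have h1 : am q ≠ 0 := RatFunc.algebraMap_ne_zero (fun h => hq (by simp [h]))
    have h2 : am q' ≠ 0 := RatFunc.algebraMap_ne_zero (fun h => hq' (by simp [h]))
    push_cast [map_mul, map_add]
    field_simp
  mul_mem' := by
    rintro f g ⟨p, q, hq, rfl⟩ ⟨p', q', hq', rfl⟩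
    refine ⟨p * p', q * q', by simp [hq, hq'], ?_⟩
    push_cast [map_mul]
    field_simp
  neg_mem' := by
    rintro f ⟨p, q, hq, rfl⟩
    exact ⟨-p, q, hq, by rw [map_neg, neg_div]⟩
  mem_or_inv_mem' := by
    intro f
    by_cases hf : f.denom.eval a ≠ 0
    · exact Or.inl ⟨f.num, f.denom, hf, (RatFunc.num_div_denom f).symm⟩
    · right
      push_neg at hf
      have hnum : f.num.eval a ≠ 0 := by
        obtain ⟨u, v, huv⟩ := RatFunc.isCoprime_num_denom f
        intro h0
        have := congrArg (Polynomial.eval a) huv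
        simp [h0, hf] at this
      refine ⟨f.denom, f.num, hnum, ?_⟩
      conv_lhs => rw [← RatFunc.num_div_denom f]
      rw [inv_div]

lemma mem_Vpt_iff {a : ℝ} {f : RatFunc ℝ} :
    f ∈ Vpt a ↔ ∃ p q : Polynomial ℝ, q.eval a ≠ 0 ∧ f = am p / am q := Iff.rfl

lemma denom_eval_ne_zero {a : ℝ} {f : RatFunc ℝ} (h : f ∈ Vpt a) :
    f.denom.eval a ≠ 0 := by
  obtain ⟨p, q, hq, rfl⟩ := h
  have hq0 : q ≠ 0 := fun h => hq (by simp [h])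
  obtain ⟨w, hw⟩ := (RatFunc.denom_dvd hq0).mpr ⟨p, rfl⟩
  intro h0
  rw [hw] at hq
  simp [h0] at hq

/-- Evaluation at `a` as a ring hom on `Vpt a`. -/
def evalHom (a : ℝ) : (Vpt a) →+* ℝ where
  toFun f := RatFunc.eval (RingHom.id ℝ) a f.1
  map_one' := RatFunc.eval_one _ _
  map_zero' := RatFunc.eval_zero _ _
  map_add' x y := by
    apply RatFunc.eval_add <;> rw [eval₂_id] <;> exact denom_eval_ne_zero (by exact Subtype.mem _)
  map_mul' x y := by
    apply RatFunc.eval_mul <;> rw [eval₂_id] <;> exact denom_eval_ne_zero (by exact Subtype.mem _)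

lemma isUnit_one_add_sos_Vpt (a : ℝ) {m : ℕ} (x : Fin m → Vpt a) :
    IsUnit (1 + ∑ i, (x i) ^ 2 : Vpt a) := by
  set s : Vpt a := 1 + ∑ i, (x i) ^ 2 with hs
  have hφ : evalHom a s = 1 + ∑ i, (evalHom a (x i)) ^ 2 := by
    rw [hs, map_add, map_one, map_sum]
    simp only [map_pow]
  have hφne : evalHom a s ≠ 0 := by
    rw [hφ]
    positivity
  have hnum : (s : RatFunc ℝ).num.eval a ≠ 0 := by
    intro h
    apply hφne
    show RatFunc.eval (RingHom.id ℝ) a (s : RatFunc ℝ) = 0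
    rw [RatFunc.eval, eval₂_id, h, zero_div]
  have hs0 : (s : RatFunc ℝ) ≠ 0 := by
    intro h
    apply hnum
    rw [h]
    simp
  have hinv : (s : RatFunc ℝ)⁻¹ ∈ Vpt a :=
    ⟨(s : RatFunc ℝ).denom, (s : RatFunc ℝ).num, hnum,
      by conv_lhs => rw [← RatFunc.num_div_denom (s : RatFunc ℝ)]
         rw [inv_div]⟩
  refine isUnit_iff_exists_inv.mpr ⟨⟨_, hinv⟩, ?_⟩
  ext
  push_cast
  exact mul_inv_cancel₀ hs0

lemma formallyReal_residue_of_units (V : ValuationSubring (RatFunc ℝ))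
    (h : ∀ (m : ℕ) (x : Fin m → V), IsUnit (1 + ∑ i, (x i) ^ 2 : V)) :
    FormallyReal (IsLocalRing.ResidueField V) := by
  intro m y hy
  choose x hx using fun i => IsLocalRing.residue_surjective (R := V) (y i)
  have h0 : IsLocalRing.residue V (1 + ∑ i, (x i) ^ 2) = 0 := by
    rw [map_add, map_one, map_sum]
    simp only [map_pow, hx]
    exact hy
  have hmem := (IsLocalRing.residue_eq_zero_iff _).mp h0
  exact ((IsLocalRing.mem_maximalIdeal _).mp hmem) (h m x)





/-- The valuation subring of rational functions bounded at infinity. -/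
def Vinf : ValuationSubring (RatFunc ℝ) where
  carrier := {f | ∃ p q : Polynomial ℝ, q ≠ 0 ∧ p.degree ≤ q.degree ∧ f = am p / am q}
  zero_mem' := ⟨0, 1, one_ne_zero, by simp, by simp⟩
  one_mem' := ⟨1, 1, one_ne_zero, le_rfl, by simp⟩
  add_mem' := by
    rintro f g ⟨p, q, hq, hd, rfl⟩ ⟨p', q', hq', hd', rfl⟩
    refine ⟨p * q' + p' * q, q * q', mul_ne_zero hq hq', ?_, ?_⟩
    · refine le_trans (Polynomial.degree_add_le _ _) (max_le ?_ ?_)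
      · rw [Polynomial.degree_mul, Polynomial.degree_mul]
        exact add_le_add hd le_rfl
      · rw [Polynomial.degree_mul, Polynomial.degree_mul]
        rw [add_comm (degree q) (degree q')]
        exact add_le_add hd' le_rfl
    · have h1 : am q ≠ 0 := RatFunc.algebraMap_ne_zero hq
      have h2 : am q' ≠ 0 := RatFunc.algebraMap_ne_zero hq'
      push_cast [map_mul, map_add]
      field_simp
  mul_mem' := by
    rintro f g ⟨p, q, hq, hd, rfl⟩ ⟨p', q', hq', hd', rfl⟩
    refine ⟨p * p', q * q', mul_ne_zero hq hq', ?_, ?_⟩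
    · rw [Polynomial.degree_mul, Polynomial.degree_mul]
      exact add_le_add hd hd'
    · push_cast [map_mul]
      field_simp
  neg_mem' := by
    rintro f ⟨p, q, hq, hd, rfl⟩
    exact ⟨-p, q, hq, by simpa using hd, by rw [map_neg, neg_div]⟩
  mem_or_inv_mem' := by
    intro f
    by_cases hd : f.num.degree ≤ f.denom.degree
    · exact Or.inl ⟨f.num, f.denom, RatFunc.denom_ne_zero f, hd, (RatFunc.num_div_denom f).symm⟩
    · right
      push_neg at hd
      have hnum : f.num ≠ 0 := by
        intro h0
        rw [h0, Polynomial.degree_zero] at hd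
        exact not_lt_bot (hd.trans_le bot_le)
      refine ⟨f.denom, f.num, hnum, hd.le, ?_⟩
      conv_lhs => rw [← RatFunc.num_div_denom f]
      rw [inv_div]

lemma mem_Vinf_iff {f : RatFunc ℝ} :
    f ∈ Vinf ↔ ∃ p q : Polynomial ℝ, q ≠ 0 ∧ p.degree ≤ q.degree ∧ f = am p / am q := Iff.rfl

lemma num_degree_le_of_mem_Vinf {f : RatFunc ℝ} (h : f ∈ Vinf) :
    f.num.degree ≤ f.denom.degree := by
  obtain ⟨p, q, hq, hd, heq⟩ := h
  by_cases h0 : f = 0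
  · rw [h0]
    simp
  have hkey : f.num * q = p * f.denom := (RatFunc.num_mul_eq_mul_denom_iff hq).mpr heq
  have hp : p ≠ 0 := by
    intro h1
    rw [h1] at heq
    simp at heq
    exact h0 heq
  have hnum : f.num ≠ 0 := RatFunc.num_ne_zero h0
  have hdeg := congrArg Polynomial.degree hkey
  rw [Polynomial.degree_mul, Polynomial.degree_mul] at hdeg
  have h1 : f.num.natDegree + q.natDegree = p.natDegree + f.denom.natDegree := by
    have := hdeg
    rw [Polynomial.degree_eq_natDegree hnum, Polynomial.degree_eq_natDegree hq,
      Polynomial.degree_eq_natDegree hp, Polynomial.degree_eq_natDegree (RatFunc.denom_ne_zero f)]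
      at this
    exact_mod_cast this
  have h2 : p.natDegree ≤ q.natDegree := Polynomial.natDegree_le_natDegree hd
  have h3 : f.num.natDegree ≤ f.denom.natDegree := by omega
  rw [Polynomial.degree_eq_natDegree hnum,
    Polynomial.degree_eq_natDegree (RatFunc.denom_ne_zero f)]
  exact_mod_cast h3

lemma isUnit_one_add_sos_Vinf {m : ℕ} (x : Fin m → Vinf) :
    IsUnit (1 + ∑ i, (x i) ^ 2 : Vinf) := by
  set s : Vinf := 1 + ∑ i, (x i) ^ 2 with hs
  choose p q hq hdeg hrep using fun i => (x i).2
  set d : Polynomial ℝ := ∏ j, q j with hd_def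
  have hd : d ≠ 0 := Finset.prod_ne_zero_iff.mpr (fun j _ => hq j)
  set P : Fin m → Polynomial ℝ := fun i => p i * ∏ j ∈ Finset.univ.erase i, q j with hP_def
  have hrepK : ∀ i, ((x i : RatFunc ℝ)) * am d = am (P i) := by
    intro i
    rw [hP_def, hd_def]
    simp only
    rw [← Finset.mul_prod_erase _ _ (Finset.mem_univ i), map_mul, map_mul, ← mul_assoc]
    congr 1
    rw [hrep i]
    rw [div_mul_cancel₀]
    exact RatFunc.algebraMap_ne_zero (hq i)
  have hPdeg : ∀ i, (P i).degree ≤ d.degree := by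
    intro i
    rw [hP_def, hd_def]
    simp only
    conv_rhs => rw [← Finset.mul_prod_erase _ _ (Finset.mem_univ i)]
    rw [Polynomial.degree_mul, Polynomial.degree_mul]
    exact add_le_add (hdeg i) le_rfl
  set N : Polynomial ℝ := d ^ 2 + ∑ i, (P i) ^ 2 with hN_def
  have hsK : ((s : RatFunc ℝ)) * (am d) ^ 2 = am N := by
    rw [hN_def, map_add, map_pow, map_sum]
    simp only [map_pow]
    have hcoe : ((s : RatFunc ℝ)) = 1 + ∑ i, ((x i : RatFunc ℝ)) ^ 2 := by
      rw [hs]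
      push_cast
      rfl
    rw [hcoe, add_mul, one_mul, Finset.sum_mul]
    congr 1
    refine Finset.sum_congr rfl (fun i _ => ?_)
    rw [← hrepK i, mul_pow]
  have hs0 : (s : RatFunc ℝ) ≠ 0 := by
    have hcoe : ((s : RatFunc ℝ)) = 1 + ∑ i, ((x i : RatFunc ℝ)) ^ 2 := by
      rw [hs]; push_cast; rfl
    rw [hcoe]
    exact one_add_sos_ne_zero _
  have hN0 : N ≠ 0 := by
    intro h0
    apply hs0
    have : (s : RatFunc ℝ) * (am d) ^ 2 = 0 := by rw [hsK, h0, map_zero]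
    rcases mul_eq_zero.mp this with h | h
    · exact h
    · exact absurd h (pow_ne_zero _ (RatFunc.algebraMap_ne_zero hd))
  -- degree bound via analysis
  have hdeg2 : (d ^ 2).degree ≤ N.degree := by
    by_contra hlt
    push_neg at hlt
    have htend : Tendsto (fun t : ℝ => N.eval t / (d ^ 2).eval t) atTop (nhds 0) :=
      Polynomial.div_tendsto_zero_of_degree_lt N (d ^ 2) hlt
    have hev : ∀ᶠ t : ℝ in atTop, 1 ≤ N.eval t / (d ^ 2).eval t := by
      filter_upwards [Polynomial.eventually_no_roots d hd] with t ht
      have hd2 : 0 < (d ^ 2).eval t := by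
        rw [Polynomial.eval_pow]
        have : d.eval t ≠ 0 := ht
        positivity
      rw [le_div_iff₀ hd2, one_mul]
      rw [hN_def]
      simp only [Polynomial.eval_add, Polynomial.eval_pow, Polynomial.eval_finset_sum]
      have : 0 ≤ ∑ i, ((P i).eval t) ^ 2 := Finset.sum_nonneg (fun i _ => sq_nonneg _)
      nlinarith [this]
    have := ge_of_tendsto htend hev
    linarith
  have hinv : (s : RatFunc ℝ)⁻¹ ∈ Vinf := by
    refine ⟨d ^ 2, N, hN0, hdeg2, ?_⟩
    rw [eq_div_iff (RatFunc.algebraMap_ne_zero hN0)]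
    rw [← hsK]
    field_simp
    rw [map_pow]
  refine isUnit_iff_exists_inv.mpr ⟨⟨_, hinv⟩, ?_⟩
  ext
  push_cast
  exact mul_inv_cancel₀ hs0






lemma gen_mem (x : RatFunc ℝ) : (1 + x ^ 2)⁻¹ ∈ DR :=
  Subring.subset_closure ⟨x, rfl⟩

lemma constC_mem_Ioc {c : ℝ} (h0 : 0 < c) (h1 : c ≤ 1) : RatFunc.C c ∈ DR := by
  have hs : Real.sqrt (c⁻¹ - 1) ^ 2 = c⁻¹ - 1 :=
    Real.sq_sqrt (by nlinarith [inv_pos.mpr h0, mul_inv_cancel₀ (ne_of_gt h0)])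
  have key : RatFunc.C c = (1 + (RatFunc.C (Real.sqrt (c⁻¹ - 1))) ^ 2)⁻¹ := by
    rw [← map_pow, ← map_one (RatFunc.C (K := ℝ)), ← map_add, ← map_inv₀]
    congr 1
    rw [hs]
    field_simp
    ring
  rw [key]
  exact gen_mem _

lemma constC_mem (c : ℝ) : RatFunc.C c ∈ DR := by
  have h1 : (0 : ℝ) < (⌊c⌋ : ℝ) + 1 - c := by
    have := Int.lt_floor_add_one c
    linarith
  have h2 : (⌊c⌋ : ℝ) + 1 - c ≤ 1 := by
    have := Int.floor_le c
    linarith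
  have hmem := constC_mem_Ioc h1 h2
  have key : RatFunc.C c = ((⌊c⌋ + 1 : ℤ) : RatFunc ℝ) - RatFunc.C ((⌊c⌋ : ℝ) + 1 - c) := by
    rw [← map_intCast (RatFunc.C (K := ℝ)) (⌊c⌋ + 1), ← map_sub]
    congr 1
    push_cast
    ring
  rw [key]
  exact sub_mem (intCast_mem DR _) hmem

lemma t_div_one_add_sq_mem (t : RatFunc ℝ) (ht : 1 + t ≠ 0) : t / (1 + t ^ 2) ∈ DR := by
  have h1 : (1 + t ^ 2) ≠ 0 := one_add_sq_ne_zero t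
  have h2 : 1 + ((1 - t) / (1 + t)) ^ 2 ≠ 0 := one_add_sq_ne_zero _
  have key : t / (1 + t ^ 2) = (1 + ((1 - t) / (1 + t)) ^ 2)⁻¹ - RatFunc.C (1 / 2) := by
    have hC : RatFunc.C ((1 : ℝ) / 2) = (1 : RatFunc ℝ) / 2 := by
      rw [map_div₀, map_one, map_ofNat]
    have h3 : (1 + t) ^ 2 ≠ 0 := pow_ne_zero _ ht
    have h4 : (1 + ((1 - t) / (1 + t)) ^ 2) = 2 * (1 + t ^ 2) / ((1 + t) ^ 2) := by
      field_simp
      ring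
    have h5 : (2 : RatFunc ℝ) ≠ 0 := by
      rw [show (2 : RatFunc ℝ) = RatFunc.C 2 from (map_ofNat _ 2).symm]
      exact fun h => two_ne_zero (RingHom.injective (RatFunc.C (K := ℝ)) (by simpa using h))
    rw [hC, h4, inv_div, div_sub_div _ _ (mul_ne_zero h5 h1) h5,
      div_eq_div_iff h1 (mul_ne_zero (mul_ne_zero h5 h1) h5)]
    all_goals first | ring | exact h5
  rw [key]
  exact sub_mem (gen_mem _) (constC_mem _)

lemma one_add_wsq (u e : ℝ) (he : 0 < e) :
    1 + ((RatFunc.X + RatFunc.C u) * RatFunc.C (Real.sqrt e)⁻¹) ^ 2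
      = ((RatFunc.X + RatFunc.C u) ^ 2 + RatFunc.C e) * (RatFunc.C e)⁻¹ := by
  have hse : Real.sqrt e ≠ 0 := by positivity
  have hCe : RatFunc.C e ≠ 0 := by
    simpa using (ne_of_gt he)
  have hsq : (RatFunc.C (Real.sqrt e)) ^ 2 = RatFunc.C e := by
    rw [← map_pow, Real.sq_sqrt he.le]
  rw [map_inv₀, mul_pow, inv_pow, hsq]
  field_simp
  ring

lemma quad_ne_zero (u e : ℝ) (he : 0 < e) :
    (RatFunc.X + RatFunc.C u) ^ 2 + RatFunc.C e ≠ 0 := by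
  have hCe : RatFunc.C e ≠ 0 := by simpa using (ne_of_gt he)
  intro h0
  have := one_add_wsq u e he
  rw [h0, zero_mul] at this
  exact one_add_sq_ne_zero _ this

lemma inv_quad_mem (u e : ℝ) (he : 0 < e) :
    ((RatFunc.X + RatFunc.C u) ^ 2 + RatFunc.C e)⁻¹ ∈ DR := by
  have hCe : RatFunc.C e ≠ 0 := by simpa using (ne_of_gt he)
  have key : ((RatFunc.X + RatFunc.C u) ^ 2 + RatFunc.C e)⁻¹
      = RatFunc.C e⁻¹ * (1 + ((RatFunc.X + RatFunc.C u) * RatFunc.C (Real.sqrt e)⁻¹) ^ 2)⁻¹ := by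
    rw [one_add_wsq u e he, mul_inv, inv_inv, map_inv₀, mul_comm, mul_assoc,
      mul_inv_cancel₀ hCe, mul_one]
  rw [key]
  exact mul_mem (constC_mem _) (gen_mem _)

lemma X_ne_negC (c : ℝ) : RatFunc.X + RatFunc.C c ≠ 0 := by
  intro h0
  have : RatFunc.X = RatFunc.C (-c) := by
    rw [map_neg]
    linear_combination h0
  rw [← RatFunc.algebraMap_X, ← RatFunc.algebraMap_C (-c)] at this
  exact Polynomial.X_ne_C (-c) (RatFunc.algebraMap_injective ℝ this)

lemma lin_div_quad_mem (u e : ℝ) (he : 0 < e) :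
    (RatFunc.X + RatFunc.C u) * (((RatFunc.X + RatFunc.C u) ^ 2 + RatFunc.C e))⁻¹ ∈ DR := by
  have hse : Real.sqrt e > 0 := Real.sqrt_pos.mpr he
  have hCs : RatFunc.C (Real.sqrt e) ≠ 0 := by simpa using (ne_of_gt hse)
  have hCe : RatFunc.C e ≠ 0 := by simpa using (ne_of_gt he)
  set w : RatFunc ℝ := (RatFunc.X + RatFunc.C u) * RatFunc.C (Real.sqrt e)⁻¹ with hw
  have hw1 : 1 + w ≠ 0 := by
    intro h0
    apply X_ne_negC (u + Real.sqrt e)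
    have hweq : w = -1 := by linear_combination h0
    rw [hw] at hweq
    have : RatFunc.X + RatFunc.C u = -RatFunc.C (Real.sqrt e) := by
      rw [map_inv₀] at hweq
      field_simp at hweq
      linear_combination hweq
    rw [map_add]
    linear_combination this
  have hmem := t_div_one_add_sq_mem w hw1
  have hq := quad_ne_zero u e he
  have h1w2 : 1 + w ^ 2 ≠ 0 := one_add_sq_ne_zero w
  have key : (RatFunc.X + RatFunc.C u) * (((RatFunc.X + RatFunc.C u) ^ 2 + RatFunc.C e))⁻¹
      = RatFunc.C (Real.sqrt e)⁻¹ * (w / (1 + w ^ 2)) := by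
    have hsq : (RatFunc.C (Real.sqrt e)) ^ 2 = RatFunc.C e := by
      rw [← map_pow, Real.sq_sqrt he.le]
    rw [hw, one_add_wsq u e he, map_inv₀]
    field_simp
    ring_nf
    simp only [hsq]
  rw [key]
  exact mul_mem (constC_mem _) hmem






lemma quad_eq {r : Polynomial ℝ} (h2 : r.natDegree = 2) :
    r = Polynomial.C (r.coeff 2) * Polynomial.X ^ 2 + Polynomial.C (r.coeff 1) * Polynomial.X
      + Polynomial.C (r.coeff 0) := by
  ext n
  rcases n with _ | _ | _ | n
  · simp
  · simp [Polynomial.coeff_C]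
  · simp [Polynomial.coeff_C]
  · rw [Polynomial.coeff_eq_zero_of_natDegree_lt (by omega : r.natDegree < n + 3)]
    simp [Polynomial.coeff_C, Polynomial.coeff_X]

lemma claimA : ∀ n : ℕ, ∀ q p : Polynomial ℝ, q ≠ 0 → (∀ t : ℝ, q.eval t ≠ 0) →
    p.degree ≤ q.degree → q.natDegree = n → am p / am q ∈ DR := by
  intro n
  induction n using Nat.strong_induction_on with
  | _ n IH =>
  intro q p hq0 hqr hdeg hn
  by_cases hn0 : q.natDegree = 0
  · -- base case : q is a nonzero constant
    have hqC : q = Polynomial.C (q.coeff 0) :=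
      Polynomial.eq_C_coeff_zero_iff_natDegree_eq_zero.mpr hn0
    have hp : p.degree ≤ 0 := le_trans hdeg (by rw [hqC]; exact Polynomial.degree_C_le)
    have hpC : p = Polynomial.C (p.coeff 0) := Polynomial.degree_le_zero_iff.mp hp
    rw [hqC, hpC, RatFunc.algebraMap_C, RatFunc.algebraMap_C, ← map_div₀]
    exact constC_mem _
  · -- inductive step
    have hqu : ¬IsUnit q := by
      intro hu
      rw [Polynomial.isUnit_iff_degree_eq_zero] at hu
      exact hn0 (Polynomial.natDegree_eq_of_degree_eq_some hu)
    obtain ⟨r, hirr, hdvd⟩ := WfDvdMonoid.exists_irreducible_factor hqu hq0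
    obtain ⟨q₁, rfl⟩ := hdvd
    have hr0 : r ≠ 0 := hirr.ne_zero
    have hq10 : q₁ ≠ 0 := by rintro rfl; simp at hq0
    have hrnr : ∀ t : ℝ, r.eval t ≠ 0 := fun t h => hqr t (by simp [h])
    have hq1nr : ∀ t : ℝ, q₁.eval t ≠ 0 := fun t h => hqr t (by simp [h])
    have hrle := hirr.natDegree_le_two
    have hrne0 : r.natDegree ≠ 0 := by
      intro h0
      have hC := Polynomial.eq_C_coeff_zero_iff_natDegree_eq_zero.mpr h0
      have hc0 : r.coeff 0 ≠ 0 := by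
        intro h
        rw [h, map_zero] at hC
        exact hr0 hC
      exact hirr.not_isUnit (hC ▸ Polynomial.isUnit_C.mpr (isUnit_iff_ne_zero.mpr hc0))
    have hrne1 : r.natDegree ≠ 1 := by
      intro h1
      have hr_eq := Polynomial.eq_X_add_C_of_natDegree_le_one (le_of_eq h1)
      have ha : r.coeff 1 ≠ 0 := by
        intro h0
        rw [h0, map_zero, zero_mul, zero_add] at hr_eq
        exact hrne0 (by rw [hr_eq]; simp)
      apply hrnr (-(r.coeff 0) / (r.coeff 1))
      rw [hr_eq]
      simp only [Polynomial.eval_add, Polynomial.eval_mul, Polynomial.eval_C, Polynomial.eval_X]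
      simp only [Polynomial.coeff_add, Polynomial.coeff_C_mul, Polynomial.coeff_X_zero,
        Polynomial.coeff_X_one, Polynomial.coeff_C_zero, Polynomial.coeff_C_ne_zero one_ne_zero,
        mul_zero, mul_one, add_zero, zero_add]
      field_simp
      ring
    have hr2 : r.natDegree = 2 := by omega
    set A := r.coeff 2 with hA_def
    have hA : A ≠ 0 := by
      have : r.coeff r.natDegree ≠ 0 := by
        rw [Polynomial.coeff_natDegree]
        exact Polynomial.leadingCoeff_ne_zero.mpr hr0
      rwa [hr2] at this
    set u := r.coeff 1 / (2 * A) with hu_def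
    set e := r.coeff 0 / A - u ^ 2 with he_def
    have hcoef1 : 2 * A * u = r.coeff 1 := by
      rw [hu_def]
      field_simp
    have hcoef0 : A * (u ^ 2 + e) = r.coeff 0 := by
      rw [he_def]
      field_simp
      ring
    have hreq : r = Polynomial.C A * ((Polynomial.X + Polynomial.C u) ^ 2 + Polynomial.C e) := by
      conv_lhs => rw [quad_eq hr2]
      rw [← hA_def, ← hcoef1, ← hcoef0]
      simp only [map_mul, map_add, map_pow, map_ofNat]
      ring
    have he : 0 < e := by
      rcases lt_or_ge 0 e with h | h
      · exact h
      · exfalso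
        apply hrnr (-u + Real.sqrt (-e))
        have hsq : (-u + Real.sqrt (-e) + u) ^ 2 = -e := by
          have h1 : -u + Real.sqrt (-e) + u = Real.sqrt (-e) := by ring
          rw [h1]
          exact Real.sq_sqrt (by linarith)
        rw [hreq]
        simp only [Polynomial.eval_mul, Polynomial.eval_add, Polynomial.eval_pow,
          Polynomial.eval_C, Polynomial.eval_X]
        rw [hsq]
        ring
    -- degrees
    have hndeg : (r * q₁).natDegree = 2 + q₁.natDegree := by
      rw [Polynomial.natDegree_mul hr0 hq10, hr2]
    have hq1lt : q₁.natDegree < n := by omega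
    -- leading coefficient split
    set lam := p.coeff ((r * q₁).natDegree) / (r * q₁).leadingCoeff with hlam_def
    set p' := p - Polynomial.C lam * (r * q₁) with hp'_def
    have hp'deg : p'.degree < (r * q₁).degree := by
      rw [Polynomial.degree_eq_natDegree hq0]
      rw [Polynomial.degree_lt_iff_coeff_zero]
      intro m hm
      rw [hp'_def, Polynomial.coeff_sub, Polynomial.coeff_C_mul]
      rcases eq_or_lt_of_le hm with hm' | hm'
      · rw [← hm', hlam_def, Polynomial.coeff_natDegree,
          div_mul_cancel₀ _ (Polynomial.leadingCoeff_ne_zero.mpr hq0), sub_self]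
      · rw [Polynomial.coeff_eq_zero_of_natDegree_lt hm',
          Polynomial.coeff_eq_zero_of_natDegree_lt
            (lt_of_le_of_lt (Polynomial.natDegree_le_natDegree hdeg) hm'),
          mul_zero, sub_zero]
    -- division by q₁
    have hmod := EuclideanDomain.div_add_mod p' q₁
    have htdeg : (p' % q₁).degree < q₁.degree := EuclideanDomain.mod_lt _ hq10
    have hsdeg : (p' / q₁).degree ≤ 1 := by
      by_cases hs0 : p' / q₁ = 0
      · rw [hs0, Polynomial.degree_zero]
        exact bot_le
      have hq1bot : q₁.degree ≠ ⊥ := fun h => hq10 (Polynomial.degree_eq_bot.mp h)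
      have h1 : (q₁ * (p' / q₁)).degree < (r * q₁).degree := by
        have heq : q₁ * (p' / q₁) = p' - p' % q₁ := by
          linear_combination hmod
        rw [heq]
        refine lt_of_le_of_lt (Polynomial.degree_sub_le _ _) (max_lt hp'deg ?_)
        refine lt_of_lt_of_le htdeg ?_
        rw [Polynomial.degree_mul]
        exact le_add_of_nonneg_left (Polynomial.zero_le_degree_iff.mpr hr0)
      rw [Polynomial.degree_mul, Polynomial.degree_mul] at h1
      have hrdeg : r.degree = (2 : ℕ) := by
        rw [Polynomial.degree_eq_natDegree hr0, hr2]
      rw [hrdeg, add_comm ((2 : ℕ) : WithBot ℕ) q₁.degree] at h1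
      have h2 : (p' / q₁).degree < ((2 : ℕ) : WithBot ℕ) :=
        (WithBot.add_lt_add_iff_left hq1bot).mp h1
      have h3 : (p' / q₁).natDegree < 2 := (Polynomial.natDegree_lt_iff_degree_lt hs0).mpr h2
      have h4 : (p' / q₁).natDegree ≤ 1 := by omega
      have h5 := Polynomial.natDegree_le_iff_degree_le.mp h4
      exact_mod_cast h5
    have hs_eq := Polynomial.eq_X_add_C_of_degree_le_one hsdeg
    -- IH on q₁
    have htmem : am (p' % q₁) / am q₁ ∈ DR :=
      IH q₁.natDegree hq1lt q₁ (p' % q₁) hq10 hq1nr (le_of_lt htdeg) rfl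
    -- facts in the rational function field
    have hamr : am r = RatFunc.C A * ((RatFunc.X + RatFunc.C u) ^ 2 + RatFunc.C e) := by
      rw [hreq]
      simp only [map_mul, map_add, map_pow, RatFunc.algebraMap_C, RatFunc.algebraMap_X]
    have hamr0 : am r ≠ 0 := RatFunc.algebraMap_ne_zero hr0
    have hamq10 : am q₁ ≠ 0 := RatFunc.algebraMap_ne_zero hq10
    have hCA : RatFunc.C A ≠ 0 := fun h => hA (by
      have := RingHom.injective (RatFunc.C (K := ℝ)) (h.trans (map_zero _).symm)
      simpa using this)
    have inv_r_mem : (am r)⁻¹ ∈ DR := by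
      rw [hamr, mul_inv, ← map_inv₀]
      exact mul_mem (constC_mem _) (inv_quad_mem u e he)
    have lin_r_mem : RatFunc.X * (am r)⁻¹ ∈ DR := by
      have hkey : RatFunc.X * (am r)⁻¹
          = RatFunc.C A⁻¹ * ((RatFunc.X + RatFunc.C u)
              * ((RatFunc.X + RatFunc.C u) ^ 2 + RatFunc.C e)⁻¹)
            - RatFunc.C u * (RatFunc.C A⁻¹
              * ((RatFunc.X + RatFunc.C u) ^ 2 + RatFunc.C e)⁻¹) := by
        rw [hamr, mul_inv, ← map_inv₀]
        ring
      rw [hkey]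
      exact sub_mem (mul_mem (constC_mem _) (lin_div_quad_mem u e he))
        (mul_mem (constC_mem _) (mul_mem (constC_mem _) (inv_quad_mem u e he)))
    have s_r_mem : am (p' / q₁) * (am r)⁻¹ ∈ DR := by
      rw [hs_eq]
      simp only [map_add, map_mul, RatFunc.algebraMap_C, RatFunc.algebraMap_X]
      rw [add_mul, mul_assoc]
      exact add_mem (mul_mem (constC_mem _) lin_r_mem) (mul_mem (constC_mem _) inv_r_mem)
    -- assembling everything
    have hmodK : am q₁ * am (p' / q₁) + am (p' % q₁) = am p' := by
      rw [← map_mul, ← map_add, hmod]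
    have hsplit : am p / am (r * q₁) = RatFunc.C lam + am p' / am (r * q₁) := by
      rw [hp'_def]
      simp only [map_sub, map_mul, RatFunc.algebraMap_C]
      field_simp
      ring
    have hfin : am p' / am (r * q₁)
        = am (p' / q₁) * (am r)⁻¹ + (am (p' % q₁) / am q₁) * (am r)⁻¹ := by
      rw [map_mul, ← hmodK]
      field_simp
    rw [hsplit, hfin]
    exact add_mem (constC_mem _) (add_mem s_r_mem (mul_mem htmem inv_r_mem))


end DressProof

/-- For `K = ℝ(X)`, the minimal Dress ring of `K` equals the Schülting
ring of `K`, i.e. the intersection of all valuation subrings of `K` with formally real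
residue field. -/
theorem minimalDressRing_ratFunc_eq_schulting (z : RatFunc ℝ) :
    z ∈ Subring.closure {r : RatFunc ℝ | ∃ x : RatFunc ℝ, r = (1 + x ^ 2)⁻¹} ↔
      ∀ V : ValuationSubring (RatFunc ℝ),
        FormallyReal (IsLocalRing.ResidueField V) → z ∈ V := by
  constructor
  · intro hz V hV
    exact DressProof.forward hz V hV
  · intro h
    have hpt : ∀ a : ℝ, z.denom.eval a ≠ 0 := fun a =>
      DressProof.denom_eval_ne_zero
        (h (DressProof.Vpt a)
          (DressProof.formallyReal_residue_of_units _ (fun _ x => DressProof.isUnit_one_add_sos_Vpt a x)))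
    have hinf : z ∈ DressProof.Vinf :=
      h DressProof.Vinf
        (DressProof.formallyReal_residue_of_units _ (fun _ x => DressProof.isUnit_one_add_sos_Vinf x))
    have hdeg : z.num.degree ≤ z.denom.degree := DressProof.num_degree_le_of_mem_Vinf hinf
    rw [← RatFunc.num_div_denom z]
    exact DressProof.claimA z.denom.natDegree z.denom z.num (RatFunc.denom_ne_zero z)
      hpt hdeg rfl

end
end

section
/- Let n ≥ 2 and let K = ℝ(X_1, …, X_n) be the field of rational functions in n variables over ℝ (the fraction field of the polynomial ring ℝ[X_1,…,X_n]). Then the minimal Dress ring D_K of K is strictly contained in the Schülting ring R_K, the intersection of all valuation subrings of K whose residue field is formally real; equivalently, there exists a valuation subring V of K containing D_K whose residue field is not formally real. -/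
open Polynomial

theorem mv_sos3 {k : ℕ} {a b c : MvPolynomial (Fin k) ℝ}
    (h : a ^ 2 + b ^ 2 + c ^ 2 = 0) : a = 0 ∧ b = 0 ∧ c = 0 := by
  have key : ∀ x : Fin k → ℝ, MvPolynomial.eval x a = 0 ∧ MvPolynomial.eval x b = 0 ∧
      MvPolynomial.eval x c = 0 := by
    intro x
    have h' := congrArg (MvPolynomial.eval x) h
    simp only [map_add, map_pow, map_zero] at h'
    refine ⟨?_, ?_, ?_⟩ <;> nlinarith [sq_nonneg (MvPolynomial.eval x a),
      sq_nonneg (MvPolynomial.eval x b), sq_nonneg (MvPolynomial.eval x c)]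
  exact ⟨MvPolynomial.funext fun x => by simpa using (key x).1,
    MvPolynomial.funext fun x => by simpa using (key x).2.1,
    MvPolynomial.funext fun x => by simpa using (key x).2.2⟩

theorem sos3_of_ringEquiv {A B : Type*} [CommRing A] [CommRing B] (e : A ≃+* B)
    (h : ∀ x y z : A, x ^ 2 + y ^ 2 + z ^ 2 = 0 → x = 0 ∧ y = 0 ∧ z = 0) :
    ∀ x y z : B, x ^ 2 + y ^ 2 + z ^ 2 = 0 → x = 0 ∧ y = 0 ∧ z = 0 := by
  intro x y z hx
  have h0 : e.symm x ^ 2 + e.symm y ^ 2 + e.symm z ^ 2 = 0 := by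
    have := congrArg e.symm hx
    simpa only [map_add, map_pow, map_zero] using this
  obtain ⟨h1, h2, h3⟩ := h _ _ _ h0
  refine ⟨?_, ?_, ?_⟩
  · simpa using congrArg e h1
  · simpa using congrArg e h2
  · simpa using congrArg e h3

theorem frac_pythag {A : Type*} [CommRing A] [IsDomain A]
    (h : ∀ x y z : A, x ^ 2 + y ^ 2 + z ^ 2 = 0 → x = 0 ∧ y = 0 ∧ z = 0)
    (z w : FractionRing A) : 1 + z ^ 2 + w ^ 2 ≠ 0 := by
  intro hzw
  obtain ⟨a1, b1, hb1, rfl⟩ := IsFractionRing.div_surjective (A := A) z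
  obtain ⟨a2, b2, hb2, rfl⟩ := IsFractionRing.div_surjective (A := A) w
  rw [mem_nonZeroDivisors_iff_ne_zero] at hb1 hb2
  have hb1' : (algebraMap A (FractionRing A)) b1 ≠ 0 := fun hh =>
    hb1 (IsFractionRing.injective A (FractionRing A) (by simpa using hh))
  have hb2' : (algebraMap A (FractionRing A)) b2 ≠ 0 := fun hh =>
    hb2 (IsFractionRing.injective A (FractionRing A) (by simpa using hh))
  have hzw2 : (algebraMap A (FractionRing A) b1) ^ 2 * (algebraMap A (FractionRing A) b2) ^ 2 +
      (algebraMap A (FractionRing A) a1) ^ 2 * (algebraMap A (FractionRing A) b2) ^ 2 +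
      (algebraMap A (FractionRing A) a2) ^ 2 * (algebraMap A (FractionRing A) b1) ^ 2 = 0 := by
    field_simp at hzw
    linear_combination hzw
  have him : algebraMap A (FractionRing A) ((b1 * b2) ^ 2 + (a1 * b2) ^ 2 + (a2 * b1) ^ 2) =
      algebraMap A (FractionRing A) 0 := by
    simp only [map_add, map_pow, map_mul, map_zero]
    linear_combination hzw2
  have := (h _ _ _ (IsFractionRing.injective A (FractionRing A) him)).1
  exact (mul_ne_zero hb1 hb2) this

theorem two_ne_zero_of_pythag {F : Type*} [Field F]
    (h1 : ∀ z w : F, 1 + z ^ 2 + w ^ 2 ≠ 0) : (2 : F) ≠ 0 := by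
  intro h
  exact h1 1 0 (by linear_combination h)

theorem sos2_of_pythag {F : Type*} [Field F]
    (h1 : ∀ z w : F, 1 + z ^ 2 + w ^ 2 ≠ 0) {x y : F}
    (h : x ^ 2 + y ^ 2 = 0) : x = 0 ∧ y = 0 := by
  by_cases hx : x = 0
  · subst hx
    simp only [ne_eq, OfNat.ofNat_ne_zero, not_false_eq_true, zero_pow, zero_add] at h
    exact ⟨rfl, pow_eq_zero_iff (by norm_num) |>.mp h⟩
  · exfalso
    apply h1 (y / x) 0
    field_simp
    linear_combination h

theorem irreducible_X_sq_add {F : Type*} [Field F] (c : F)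
    (h1 : ∀ z w : F, 1 + z ^ 2 + w ^ 2 ≠ 0) :
    Irreducible (X ^ 2 + C (1 + c ^ 2) : F[X]) := by
  have hm : (X ^ 2 + C (1 + c ^ 2) : F[X]).Monic := monic_X_pow_add_C _ (by norm_num)
  by_contra hir
  rw [hm.not_irreducible_iff_exists_add_mul_eq_coeff natDegree_X_pow_add_C] at hir
  obtain ⟨c1, c2, hmul, hadd⟩ := hir
  simp only [coeff_add, coeff_X_pow, coeff_C] at hmul hadd
  norm_num at hmul hadd
  exact h1 c c1 (by linear_combination hmul - c1 * hadd)

theorem dvd_of_map_dvd {D F : Type*} [CommRing D] [CommRing F] (ψ : D →+* F)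
    (hinj : Function.Injective ψ) {P a : D[X]} (hP : P.Monic)
    (h : P.map ψ ∣ a.map ψ) : P ∣ a := by
  rw [← modByMonic_eq_zero_iff_dvd hP]
  rw [← modByMonic_eq_zero_iff_dvd (hP.map ψ), ← map_modByMonic ψ hP] at h
  exact Polynomial.map_injective ψ hinj (by simpa using h)

theorem field_dvd_sq_add_sq {F : Type*} [Field F] (c : F)
    (h1 : ∀ z w : F, 1 + z ^ 2 + w ^ 2 ≠ 0)
    (h2 : ∀ f : F, f ^ 2 ≠ 1 + c ^ 2)
    (a b : F[X]) (h : (X ^ 2 + C (1 + c ^ 2)) ∣ a ^ 2 + b ^ 2) :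
    (X ^ 2 + C (1 + c ^ 2)) ∣ a ∧ (X ^ 2 + C (1 + c ^ 2)) ∣ b := by
  set P : F[X] := X ^ 2 + C (1 + c ^ 2) with hPdef
  have hm : P.Monic := monic_X_pow_add_C _ (by norm_num)
  have hdeg : P.degree = 2 := degree_X_pow_add_C (by norm_num) _
  set r := a %ₘ P with hrdef
  set t := b %ₘ P with htdef
  have hdvd_a : P ∣ a - r := by
    have := modByMonic_add_div a P
    exact ⟨a /ₘ P, by linear_combination -this⟩
  have hdvd_b : P ∣ b - t := by
    have := modByMonic_add_div b P
    exact ⟨b /ₘ P, by linear_combination -this⟩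
  have hdvd_rt : P ∣ r ^ 2 + t ^ 2 := by
    have h1' : P ∣ (a - r) * (a + r) + (b - t) * (b + t) :=
      dvd_add (hdvd_a.mul_right _) (hdvd_b.mul_right _)
    have := dvd_sub h h1'
    convert this using 1
    ring
  have hdegle : ∀ s : F[X], s.degree < 2 → s.degree ≤ 1 := by
    intro s hs
    by_contra hc
    push_neg at hc
    have h2le := Nat.WithBot.add_one_le_of_lt hc
    rw [one_add_one_eq_two] at h2le
    exact absurd hs (not_lt.mpr h2le)
  have hrd : r.degree ≤ 1 := hdegle r (hdeg ▸ degree_modByMonic_lt a hm)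
  have htd : t.degree ≤ 1 := hdegle t (hdeg ▸ degree_modByMonic_lt b hm)
  have hr : r = C (r.coeff 1) * X + C (r.coeff 0) := eq_X_add_C_of_degree_le_one hrd
  have ht : t = C (t.coeff 1) * X + C (t.coeff 0) := eq_X_add_C_of_degree_le_one htd
  set r1 := r.coeff 1
  set r0 := r.coeff 0
  set t1 := t.coeff 1
  set t0 := t.coeff 0
  have key : r ^ 2 + t ^ 2 - C (r1 ^ 2 + t1 ^ 2) * P =
      C (2 * (r1 * r0 + t1 * t0)) * X +
        C (r0 ^ 2 + t0 ^ 2 - (1 + c ^ 2) * (r1 ^ 2 + t1 ^ 2)) := by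
    rw [hr, ht, hPdef]
    simp only [map_add, map_mul, map_sub, map_pow, map_one, map_ofNat]
    ring
  have hrem : C (2 * (r1 * r0 + t1 * t0)) * X +
      C (r0 ^ 2 + t0 ^ 2 - (1 + c ^ 2) * (r1 ^ 2 + t1 ^ 2)) = 0 := by
    refine eq_zero_of_dvd_of_degree_lt (p := P) ?_ ?_
    · rw [← key]
      exact dvd_sub hdvd_rt (dvd_mul_left P (C (r1 ^ 2 + t1 ^ 2)))
    · rw [hdeg]
      exact degree_linear_lt
  have hc1 : 2 * (r1 * r0 + t1 * t0) = 0 := by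
    have h' := congrArg (fun q => Polynomial.coeff q 1) hrem
    simpa only [coeff_add, coeff_C_mul, coeff_X_one, coeff_C, coeff_zero, mul_one,
      if_neg (one_ne_zero), add_zero] using h'
  have hc0 : r0 ^ 2 + t0 ^ 2 - (1 + c ^ 2) * (r1 ^ 2 + t1 ^ 2) = 0 := by
    have h' := congrArg (fun q => Polynomial.coeff q 0) hrem
    simpa only [coeff_add, coeff_C_mul, coeff_X_zero, coeff_C, coeff_zero, mul_zero,
      if_pos rfl, if_true, zero_add] using h'
  have hs : r1 * r0 + t1 * t0 = 0 := by
    rcases mul_eq_zero.mp hc1 with h' | h'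
    · exact absurd h' (two_ne_zero_of_pythag h1)
    · exact h'
  by_cases hk : r1 ^ 2 + t1 ^ 2 = 0
  · obtain ⟨e1, e2⟩ := sos2_of_pythag h1 hk
    have h00 : r0 ^ 2 + t0 ^ 2 = 0 := by
      rw [e1, e2] at hc0
      linear_combination hc0
    obtain ⟨e3, e4⟩ := sos2_of_pythag h1 h00
    have hr0 : r = 0 := by rw [hr, e1, e3]; simp
    have ht0 : t = 0 := by rw [ht, e2, e4]; simp
    exact ⟨(modByMonic_eq_zero_iff_dvd hm).mp hr0, (modByMonic_eq_zero_iff_dvd hm).mp ht0⟩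
  · exfalso
    apply h2 ((r0 * t1 - r1 * t0) / (r1 ^ 2 + t1 ^ 2))
    have hq : (1 + c ^ 2) * (r1 ^ 2 + t1 ^ 2) ^ 2 = (r0 * t1 - r1 * t0) ^ 2 := by
      linear_combination (-(r1 ^ 2 + t1 ^ 2)) * hc0 + (r1 * r0 + t1 * t0) * hs
    field_simp
    linear_combination -hq

theorem no_odd_square {G : Type*} [CommRing G] [IsDomain G] [WfDvdMonoid G]
    {q A B : G} (hq : Prime q) (hB : B ≠ 0) (h : A ^ 2 = q * B ^ 2) : False := by
  have hA : A ≠ 0 := by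
    rintro rfl
    rcases mul_eq_zero.mp (show q * B ^ 2 = 0 by linear_combination -h) with h' | h'
    · exact hq.ne_zero h'
    · exact hB (pow_eq_zero_iff (by norm_num) |>.mp h')
  obtain ⟨s, A', hA', rfl⟩ := WfDvdMonoid.max_power_factor hA hq.irreducible
  obtain ⟨t, B', hB', rfl⟩ := WfDvdMonoid.max_power_factor hB hq.irreducible
  have h2 : q ^ (2 * s) * A' ^ 2 = q ^ (2 * t + 1) * B' ^ 2 := by
    linear_combination h
  rcases le_or_gt (2 * s) (2 * t + 1) with hle | hlt
  · have hlt' : 2 * s < 2 * t + 1 := by omega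
    have he : 2 * s + (2 * t + 1 - 2 * s) = 2 * t + 1 := by omega
    have h3 : A' ^ 2 = q ^ (2 * t + 1 - 2 * s) * B' ^ 2 := by
      apply mul_left_cancel₀ (pow_ne_zero (2 * s) hq.ne_zero)
      rw [h2, ← mul_assoc, ← pow_add, he]
    have hdvd : q ∣ A' ^ 2 := by
      rw [h3]
      exact dvd_mul_of_dvd_left (dvd_pow_self q (by omega)) _
    exact hA' (hq.dvd_of_dvd_pow hdvd)
  · have he : 2 * t + 1 + (2 * s - (2 * t + 1)) = 2 * s := by omega
    have h3 : q ^ (2 * s - (2 * t + 1)) * A' ^ 2 = B' ^ 2 := by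
      apply mul_left_cancel₀ (pow_ne_zero (2 * t + 1) hq.ne_zero)
      rw [← h2, ← mul_assoc, ← pow_add, he]
    have hdvd : q ∣ B' ^ 2 := by
      rw [← h3]
      exact dvd_mul_of_dvd_left (dvd_pow_self q (by omega)) _
    exact hB' (hq.dvd_of_dvd_pow hdvd)

theorem not_sq_one_add_sq {B : Type*} [CommRing B] [IsDomain B]
    (hsos : ∀ x y z : B, x ^ 2 + y ^ 2 + z ^ 2 = 0 → x = 0 ∧ y = 0 ∧ z = 0)
    (f : FractionRing (Polynomial B)) :
    f ^ 2 ≠ 1 + (algebraMap (Polynomial B) (FractionRing (Polynomial B)) X) ^ 2 := by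
  intro hf
  obtain ⟨a0, b0, hb0, hrep⟩ := IsFractionRing.div_surjective (A := Polynomial B) f
  rw [mem_nonZeroDivisors_iff_ne_zero] at hb0
  have hb0' : (algebraMap (Polynomial B) (FractionRing (Polynomial B))) b0 ≠ 0 := fun hh =>
    hb0 (IsFractionRing.injective (Polynomial B) (FractionRing (Polynomial B)) (by simpa using hh))
  have hfb : f * algebraMap (Polynomial B) (FractionRing (Polynomial B)) b0 =
      algebraMap (Polynomial B) (FractionRing (Polynomial B)) a0 := by
    rw [← hrep]
    field_simp
  have him : algebraMap (Polynomial B) (FractionRing (Polynomial B)) (a0 ^ 2) =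
      algebraMap (Polynomial B) (FractionRing (Polynomial B)) ((1 + X ^ 2) * b0 ^ 2) := by
    simp only [map_mul, map_add, map_pow, map_one]
    rw [← hfb]
    linear_combination (algebraMap (Polynomial B) (FractionRing (Polynomial B)) b0) ^ 2 * hf
  have heq : a0 ^ 2 = (1 + X ^ 2) * b0 ^ 2 :=
    IsFractionRing.injective (Polynomial B) (FractionRing (Polynomial B)) him
  have hinj : Function.Injective (algebraMap B (FractionRing B)) :=
    IsFractionRing.injective B (FractionRing B)
  have hθ : Function.Injective (Polynomial.map (algebraMap B (FractionRing B))) :=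
    Polynomial.map_injective _ hinj
  have heq2 : (a0.map (algebraMap B (FractionRing B))) ^ 2 =
      (1 + X ^ 2) * (b0.map (algebraMap B (FractionRing B))) ^ 2 := by
    rw [← Polynomial.map_pow, heq]
    simp only [Polynomial.map_mul, Polynomial.map_add, Polynomial.map_pow,
      Polynomial.map_one, map_X]
  have hBne : b0.map (algebraMap B (FractionRing B)) ≠ 0 := fun hh => hb0 (hθ (by simpa using hh))
  have hirr : Irreducible (X ^ 2 + C (1 + (0 : FractionRing B) ^ 2)) :=
    irreducible_X_sq_add 0 (frac_pythag hsos)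
  have hirr' : Irreducible ((1 : (FractionRing B)[X]) + X ^ 2) := by
    have e : (X ^ 2 + C (1 + (0 : FractionRing B) ^ 2) : (FractionRing B)[X]) = 1 + X ^ 2 := by
      norm_num
      ring
    rwa [e] at hirr
  exact no_odd_square hirr'.prime hBne heq2

set_option maxHeartbeats 1000000 in
set_option synthInstance.maxHeartbeats 1000000 in
theorem master {R : Type*} [CommRing R] [IsDomain R] [UniqueFactorizationMonoid R]
    (p g0 g1 : R) (hp : Prime p) (hpe : p = 1 + g0 ^ 2 + g1 ^ 2)
    (h2 : ∀ a b : R, p ∣ a ^ 2 + b ^ 2 → p ∣ a ∧ p ∣ b)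
    (h0 : ∀ a b : R, a ^ 2 + b ^ 2 = 0 → a = 0 ∧ b = 0) :
    ∃ V : ValuationSubring (FractionRing R),
      Subring.closure {r : FractionRing R | ∃ x : FractionRing R, r = (1 + x ^ 2)⁻¹} ≤
        V.toSubring ∧
      ¬ FormallyReal (IsLocalRing.ResidueField V) := by
  classical
  have hinj : Function.Injective (algebraMap R (FractionRing R)) :=
    IsFractionRing.injective _ _
  have hmapne : ∀ {x : R}, x ≠ 0 → algebraMap R (FractionRing R) x ≠ 0 := by
    intro x hx hh
    exact hx (hinj (by simpa using hh))
  have hnd1 : ¬ p ∣ (1 : R) := fun hd => hp.not_unit (isUnit_of_dvd_one hd)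
  have hrepr : ∀ x : FractionRing R, x ≠ 0 → ∃ a b : R, b ≠ 0 ∧ (¬ p ∣ a ∨ ¬ p ∣ b) ∧
      x * algebraMap R (FractionRing R) b = algebraMap R (FractionRing R) a := by
    intro x hx0
    obtain ⟨a0, b0, hb0, hrep⟩ := IsFractionRing.div_surjective (A := R) x
    rw [mem_nonZeroDivisors_iff_ne_zero] at hb0
    have ha0 : a0 ≠ 0 := by
      rintro rfl
      apply hx0
      rw [← hrep]
      simp
    obtain ⟨s, a', ha', rfl⟩ := WfDvdMonoid.max_power_factor ha0 hp.irreducible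
    obtain ⟨t, b', hb'', rfl⟩ := WfDvdMonoid.max_power_factor hb0 hp.irreducible
    have hb'0 : b' ≠ 0 := by rintro rfl; simp at hb0
    have hpne : algebraMap R (FractionRing R) p ≠ 0 := hmapne hp.ne_zero
    have hkey : x * (algebraMap R (FractionRing R) (p ^ t * b')) =
        algebraMap R (FractionRing R) (p ^ s * a') := by
      rw [← hrep]
      exact div_mul_cancel₀ _ (hmapne hb0)
    rcases le_or_gt t s with hts | hst
    · obtain ⟨u, rfl⟩ : ∃ u, s = u + t := ⟨s - t, by omega⟩
      refine ⟨p ^ u * a', b', hb'0, Or.inr hb'', ?_⟩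
      apply mul_right_cancel₀ (pow_ne_zero t hpne)
      simp only [map_mul, map_pow] at hkey ⊢
      linear_combination hkey
    · obtain ⟨u, rfl⟩ : ∃ u, t = u + s := ⟨t - s, by omega⟩
      refine ⟨a', p ^ u * b', mul_ne_zero (pow_ne_zero u hp.ne_zero) hb'0, Or.inl ha', ?_⟩
      apply mul_right_cancel₀ (pow_ne_zero s hpne)
      simp only [map_mul, map_pow] at hkey ⊢
      linear_combination hkey
  let Vs : Subring (FractionRing R) :=
    { carrier := {x : FractionRing R | ∃ a b : R, ¬ p ∣ b ∧
        x * algebraMap R (FractionRing R) b = algebraMap R (FractionRing R) a}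
      one_mem' := ⟨1, 1, hnd1, by simp⟩
      zero_mem' := ⟨0, 1, hnd1, by simp⟩
      mul_mem' := by
        rintro x y ⟨a1, b1, hb1, hx⟩ ⟨a2, b2, hb2, hy⟩
        refine ⟨a1 * a2, b1 * b2, by rw [hp.dvd_mul]; tauto, ?_⟩
        simp only [map_mul]
        linear_combination (y * algebraMap R (FractionRing R) b2) * hx +
          (algebraMap R (FractionRing R) a1) * hy
      add_mem' := by
        rintro x y ⟨a1, b1, hb1, hx⟩ ⟨a2, b2, hb2, hy⟩
        refine ⟨a1 * b2 + a2 * b1, b1 * b2, by rw [hp.dvd_mul]; tauto, ?_⟩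
        simp only [map_mul, map_add]
        linear_combination (algebraMap R (FractionRing R) b2) * hx +
          (algebraMap R (FractionRing R) b1) * hy
      neg_mem' := by
        rintro x ⟨a1, b1, hb1, hx⟩
        exact ⟨-a1, b1, hb1, by simp only [map_neg]; linear_combination -hx⟩ }
  have hmoi : ∀ x : FractionRing R, x ∈ Vs ∨ x⁻¹ ∈ Vs := by
    intro x
    by_cases hx0 : x = 0
    · exact Or.inl ⟨0, 1, hnd1, by simp [hx0]⟩
    obtain ⟨a, b, hb0, hdisj, hxeq⟩ := hrepr x hx0
    by_cases hpb : p ∣ b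
    · have hpa : ¬ p ∣ a := by tauto
      right
      refine ⟨b, a, hpa, ?_⟩
      rw [← hxeq]
      field_simp
    · exact Or.inl ⟨a, b, hpb, hxeq⟩
  refine ⟨⟨Vs, hmoi⟩, ?_, ?_⟩
  · rw [Subring.closure_le]
    rintro r ⟨f, rfl⟩
    by_cases hf0 : f = 0
    · subst hf0
      refine ⟨1, 1, hnd1, ?_⟩
      simp
    obtain ⟨A, B, hB0, hdisj, hfeq⟩ := hrepr f hf0
    have hABne : A ^ 2 + B ^ 2 ≠ 0 := fun hh => hB0 (h0 _ _ hh).2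
    have hpAB : ¬ p ∣ A ^ 2 + B ^ 2 := by
      intro hh
      obtain ⟨hA, hB⟩ := h2 _ _ hh
      tauto
    refine ⟨B ^ 2, A ^ 2 + B ^ 2, hpAB, ?_⟩
    have hBK : algebraMap R (FractionRing R) B ≠ 0 := hmapne hB0
    have hsum : 1 + f ^ 2 = algebraMap R (FractionRing R) (A ^ 2 + B ^ 2) /
        algebraMap R (FractionRing R) (B ^ 2) := by
      rw [eq_div_iff (hmapne (pow_ne_zero 2 hB0))]
      simp only [map_add, map_pow]
      linear_combination (f * algebraMap R (FractionRing R) B +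
        algebraMap R (FractionRing R) A) * hfeq
    rw [hsum, inv_div, div_mul_cancel₀ _ (hmapne hABne)]
  · intro hFR
    have hg : ∀ r : R, algebraMap R (FractionRing R) r ∈
        (⟨Vs, hmoi⟩ : ValuationSubring (FractionRing R)) :=
      fun r => ⟨r, 1, hnd1, by simp⟩
    let u : (⟨Vs, hmoi⟩ : ValuationSubring (FractionRing R)) :=
      ⟨algebraMap R (FractionRing R) g0, hg g0⟩
    let w : (⟨Vs, hmoi⟩ : ValuationSubring (FractionRing R)) :=
      ⟨algebraMap R (FractionRing R) g1, hg g1⟩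
    have hqK : ((1 + u ^ 2 + w ^ 2 : (⟨Vs, hmoi⟩ : ValuationSubring (FractionRing R))) :
        FractionRing R) = algebraMap R (FractionRing R) p := by
      push_cast
      simp only [hpe, map_add, map_pow, map_one]
      rfl
    have hnon : ¬ IsUnit (1 + u ^ 2 + w ^ 2 :
        (⟨Vs, hmoi⟩ : ValuationSubring (FractionRing R))) := by
      intro hu
      obtain ⟨v, hv⟩ := hu.exists_right_inv
      obtain ⟨a, b, hbnd, hveq⟩ := v.2
      have hvK : algebraMap R (FractionRing R) p * (v : FractionRing R) = 1 := by
        have := congrArg Subtype.val hv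
        push_cast at this
        rw [← this, ← hqK]
        push_cast
        ring
      have hb_eq : algebraMap R (FractionRing R) b = algebraMap R (FractionRing R) (p * a) := by
        rw [map_mul]
        linear_combination (-(algebraMap R (FractionRing R) b)) * hvK +
          (algebraMap R (FractionRing R) p) * hveq
      exact hbnd ⟨a, hinj hb_eq⟩
    have hqres : IsLocalRing.residue _ (1 + u ^ 2 + w ^ 2 :
        (⟨Vs, hmoi⟩ : ValuationSubring (FractionRing R))) = 0 := by
      rw [IsLocalRing.residue_eq_zero_iff, IsLocalRing.mem_maximalIdeal, mem_nonunits_iff]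
      exact hnon
    apply hFR 2 ![IsLocalRing.residue _ u, IsLocalRing.residue _ w]
    rw [Fin.sum_univ_two]
    simp only [Matrix.cons_val_zero, Matrix.cons_val_one, Matrix.head_cons]
    have hexp : (IsLocalRing.residue _) (1 + u ^ 2 + w ^ 2 :
        (⟨Vs, hmoi⟩ : ValuationSubring (FractionRing R))) =
        1 + ((IsLocalRing.residue _) u ^ 2 + (IsLocalRing.residue _) w ^ 2) := by
      rw [map_add, map_add, map_one, map_pow, map_pow, add_assoc]
    rw [← hexp]
    exact hqres

set_option linter.unusedSectionVars false

section Tlevel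
variable {B : Type*} [CommRing B] [IsDomain B]

theorem monic_P : ((X : (Polynomial B)[X]) ^ 2 + C (X ^ 2 + 1)).Monic :=
  monic_X_pow_add (lt_of_le_of_lt degree_C_le (by norm_num))

theorem map_P : ((X : (Polynomial B)[X]) ^ 2 + C (X ^ 2 + 1)).map
      (algebraMap (Polynomial B) (FractionRing (Polynomial B))) =
    X ^ 2 + C (1 + (algebraMap (Polynomial B) (FractionRing (Polynomial B)) X) ^ 2) := by
  rw [Polynomial.map_add, Polynomial.map_pow, map_X, map_C]
  congr 1
  rw [map_add, map_pow, map_one, add_comm]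

theorem prime_P [UniqueFactorizationMonoid B]
    (hsosD : ∀ x y z : Polynomial B, x ^ 2 + y ^ 2 + z ^ 2 = 0 → x = 0 ∧ y = 0 ∧ z = 0) :
    Prime ((X : (Polynomial B)[X]) ^ 2 + C (X ^ 2 + 1)) := by
  have hirrF : Irreducible (((X : (Polynomial B)[X]) ^ 2 + C (X ^ 2 + 1)).map
      (algebraMap (Polynomial B) (FractionRing (Polynomial B)))) := by
    rw [map_P]
    exact irreducible_X_sq_add _ (frac_pythag hsosD)
  have hirr : Irreducible ((X : (Polynomial B)[X]) ^ 2 + C (X ^ 2 + 1)) :=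
    (monic_P.irreducible_iff_irreducible_map_fraction_map).mpr hirrF
  exact UniqueFactorizationMonoid.irreducible_iff_prime.mp hirr

theorem dvd_P
    (hsosB : ∀ x y z : B, x ^ 2 + y ^ 2 + z ^ 2 = 0 → x = 0 ∧ y = 0 ∧ z = 0)
    (hsosD : ∀ x y z : Polynomial B, x ^ 2 + y ^ 2 + z ^ 2 = 0 → x = 0 ∧ y = 0 ∧ z = 0)
    (a b : (Polynomial B)[X])
    (h : ((X : (Polynomial B)[X]) ^ 2 + C (X ^ 2 + 1)) ∣ a ^ 2 + b ^ 2) :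
    ((X : (Polynomial B)[X]) ^ 2 + C (X ^ 2 + 1)) ∣ a ∧
      ((X : (Polynomial B)[X]) ^ 2 + C (X ^ 2 + 1)) ∣ b := by
  have hinj : Function.Injective (algebraMap (Polynomial B) (FractionRing (Polynomial B))) :=
    IsFractionRing.injective _ _
  have hmap := Polynomial.map_dvd
    (algebraMap (Polynomial B) (FractionRing (Polynomial B))) h
  rw [map_P, Polynomial.map_add, Polynomial.map_pow, Polynomial.map_pow] at hmap
  obtain ⟨hda, hdb⟩ := field_dvd_sq_add_sq _ (frac_pythag hsosD)
    (not_sq_one_add_sq hsosB) _ _ hmap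
  constructor
  · exact dvd_of_map_dvd _ hinj monic_P (by rw [map_P]; exact hda)
  · exact dvd_of_map_dvd _ hinj monic_P (by rw [map_P]; exact hdb)

end Tlevel

set_option maxHeartbeats 2000000 in
set_option synthInstance.maxHeartbeats 1000000 in
/-- For `K = ℝ(X₁, …, Xₙ)` with `n ≥ 2`, the minimal Dress ring of `K`
is strictly contained in the Schülting ring of `K`: there is a valuation subring of `K`
containing the minimal Dress ring whose residue field is not formally real. -/
theorem minimalDressRing_lt_schulting (n : ℕ) (hn : 2 ≤ n) :
    ∃ V : ValuationSubring (FractionRing (MvPolynomial (Fin n) ℝ)),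
      Subring.closure {r : FractionRing (MvPolynomial (Fin n) ℝ) |
          ∃ x : FractionRing (MvPolynomial (Fin n) ℝ), r = (1 + x ^ 2)⁻¹} ≤ V.toSubring ∧
      ¬ FormallyReal (IsLocalRing.ResidueField V) := by
  obtain ⟨m, rfl⟩ : ∃ m, n = m + 2 := ⟨n - 2, by omega⟩
  -- ring equivalences
  let e1 : MvPolynomial (Fin (m + 2)) ℝ ≃+* Polynomial (MvPolynomial (Fin (m + 1)) ℝ) :=
    (MvPolynomial.finSuccEquiv ℝ (m + 1)).toRingEquiv
  let e2 : Polynomial (MvPolynomial (Fin (m + 1)) ℝ) ≃+*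
      Polynomial (Polynomial (MvPolynomial (Fin m) ℝ)) :=
    Polynomial.mapEquiv (MvPolynomial.finSuccEquiv ℝ m).toRingEquiv
  let E : MvPolynomial (Fin (m + 2)) ℝ ≃+* Polynomial (Polynomial (MvPolynomial (Fin m) ℝ)) :=
    e1.trans e2
  -- sums of three squares vanish
  have hsosR : ∀ x y z : MvPolynomial (Fin (m + 2)) ℝ,
      x ^ 2 + y ^ 2 + z ^ 2 = 0 → x = 0 ∧ y = 0 ∧ z = 0 := fun x y z h => mv_sos3 h
  have hsosB : ∀ x y z : MvPolynomial (Fin m) ℝ,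
      x ^ 2 + y ^ 2 + z ^ 2 = 0 → x = 0 ∧ y = 0 ∧ z = 0 := fun x y z h => mv_sos3 h
  have hsosD : ∀ x y z : Polynomial (MvPolynomial (Fin m) ℝ),
      x ^ 2 + y ^ 2 + z ^ 2 = 0 → x = 0 ∧ y = 0 ∧ z = 0 :=
    sos3_of_ringEquiv (MvPolynomial.finSuccEquiv ℝ m).toRingEquiv
      (fun x y z h => mv_sos3 h)
  -- the prime
  set g0 : MvPolynomial (Fin (m + 2)) ℝ := MvPolynomial.X (Fin.succ 0) with hg0
  set g1 : MvPolynomial (Fin (m + 2)) ℝ := MvPolynomial.X 0 with hg1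
  set p : MvPolynomial (Fin (m + 2)) ℝ := 1 + g0 ^ 2 + g1 ^ 2 with hpdef
  have hE1 : E g1 = Polynomial.X := by
    show e2 (e1 (MvPolynomial.X 0)) = Polynomial.X
    have h1 : e1 (MvPolynomial.X 0) = Polynomial.X := by
      simpa [e1] using MvPolynomial.finSuccEquiv_X_zero (R := ℝ) (n := m + 1)
    rw [h1]
    simp [e2, Polynomial.mapEquiv_apply]
  have hE0 : E g0 = Polynomial.C Polynomial.X := by
    show e2 (e1 (MvPolynomial.X (Fin.succ 0))) = Polynomial.C Polynomial.X
    have h1 : e1 (MvPolynomial.X (Fin.succ 0)) = Polynomial.C (MvPolynomial.X 0) := by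
      simpa [e1] using MvPolynomial.finSuccEquiv_X_succ (R := ℝ) (n := m + 1) (j := 0)
    rw [h1]
    simp [e2, Polynomial.mapEquiv_apply, Polynomial.map_C,
      MvPolynomial.finSuccEquiv_X_zero (R := ℝ) (n := m)]
  have hEp : E p = Polynomial.X ^ 2 + Polynomial.C (Polynomial.X ^ 2 + 1) := by
    rw [hpdef]
    rw [map_add, map_add, map_one, map_pow, map_pow, hE0, hE1]
    rw [Polynomial.C_add, Polynomial.C_pow, Polynomial.C_1]
    ring
  have hp : Prime p := by
    have hh : Prime (E p) := by rw [hEp]; exact prime_P hsosD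
    exact (MulEquiv.prime_iff (M := MvPolynomial (Fin (m + 2)) ℝ)
      (N := Polynomial (Polynomial (MvPolynomial (Fin m) ℝ))) E.toMulEquiv).mp hh
  have h2 : ∀ a b : MvPolynomial (Fin (m + 2)) ℝ,
      p ∣ a ^ 2 + b ^ 2 → p ∣ a ∧ p ∣ b := by
    intro a b h
    have hmap : E p ∣ E a ^ 2 + E b ^ 2 := by
      have h' := map_dvd E h
      have he : E (a ^ 2 + b ^ 2) = E a ^ 2 + E b ^ 2 := by
        rw [map_add, map_pow, map_pow]
      rwa [he] at h'
    rw [hEp] at hmap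
    obtain ⟨hda, hdb⟩ := dvd_P hsosB hsosD _ _ hmap
    rw [← hEp] at hda hdb
    constructor
    · have h' := map_dvd E.symm hda
      rwa [RingEquiv.symm_apply_apply, RingEquiv.symm_apply_apply] at h'
    · have h' := map_dvd E.symm hdb
      rwa [RingEquiv.symm_apply_apply, RingEquiv.symm_apply_apply] at h'
  have h0 : ∀ a b : MvPolynomial (Fin (m + 2)) ℝ,
      a ^ 2 + b ^ 2 = 0 → a = 0 ∧ b = 0 := by
    intro a b h
    obtain ⟨h1', h2', _⟩ := hsosR a b 0 (by linear_combination h)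
    exact ⟨h1', h2'⟩
  exact master p g0 g1 hp hpdef h2 h0
end

section
/- Let D be the minimal Dress ring of ℝ(X) and let u be an element of D. Then u is a unit of D if and only if there exist real polynomials γ₁, γ₂, each without real roots (γᵢ(t) ≠ 0 for all t ∈ ℝ), with deg γ₁ = deg γ₂, such that u = γ₁/γ₂. -/
open Polynomial

noncomputable section DressAux

private abbrev Dress : Subring (RatFunc ℝ) :=
  Subring.closure {s : RatFunc ℝ | ∃ x : RatFunc ℝ, s = (1 + x ^ 2)⁻¹}

private abbrev φR : Polynomial ℝ →+* RatFunc ℝ := algebraMap (Polynomial ℝ) (RatFunc ℝ)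

private lemma sq_add_sq_eq_zero {p q : Polynomial ℝ} (h : p ^ 2 + q ^ 2 = 0) :
    p = 0 ∧ q = 0 := by
  have h0 : ∀ t : ℝ, p.eval t = 0 ∧ q.eval t = 0 := by
    intro t
    have ht := congrArg (eval t) h
    simp only [eval_add, eval_pow, eval_zero] at ht
    constructor <;> nlinarith [sq_nonneg (p.eval t), sq_nonneg (q.eval t)]
  exact ⟨Polynomial.funext fun t => by simpa using (h0 t).1,
    Polynomial.funext fun t => by simpa using (h0 t).2⟩

private lemma one_add_sq_ne_zero_s10 (f : RatFunc ℝ) : 1 + f ^ 2 ≠ 0 := by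
  intro h
  have hd : φR f.denom ≠ 0 := RatFunc.algebraMap_ne_zero f.denom_ne_zero
  have hx : f * φR f.denom = φR f.num := by
    have h' := div_mul_cancel₀ (φR f.num) hd
    rwa [RatFunc.num_div_denom] at h' 
  have key : φR (f.num ^ 2 + f.denom ^ 2) = 0 := by
    have h2 : φR (f.num ^ 2 + f.denom ^ 2) = (1 + f ^ 2) * (φR f.denom) ^ 2 := by
      rw [map_add, map_pow, map_pow, ← hx]; ring
    rw [h2, h, zero_mul]
  have := (map_eq_zero_iff _ (RatFunc.algebraMap_injective ℝ)).mp key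
  exact f.denom_ne_zero (sq_add_sq_eq_zero this).2

private lemma gen_mem (f : RatFunc ℝ) : (1 + f ^ 2)⁻¹ ∈ Dress :=
  Subring.subset_closure ⟨f, rfl⟩

private lemma C_mem_of_unit {c : ℝ} (h0 : 0 < c) (h1 : c ≤ 1) : RatFunc.C c ∈ Dress := by
  apply Subring.subset_closure
  refine ⟨RatFunc.C (Real.sqrt (1 / c - 1)), ?_⟩
  have hs : Real.sqrt (1 / c - 1) ^ 2 = 1 / c - 1 :=
    Real.sq_sqrt (by rw [le_sub_iff_add_le, zero_add, le_div_iff₀ h0, one_mul]; exact h1)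
  rw [← map_pow, ← map_one (RatFunc.C (K := ℝ)), ← map_add, hs, ← map_inv₀]
  norm_num

private lemma C_mem (c : ℝ) : RatFunc.C c ∈ Dress := by
  set n : ℤ := ⌈c⌉ - 1 with hn
  have hb1 : (0 : ℝ) < c - n := by
    have := Int.ceil_lt_add_one c
    push_cast [hn]; push_cast at this; linarith
  have hb2 : c - n ≤ 1 := by
    have := Int.le_ceil c
    push_cast [hn]; linarith
  have key := C_mem_of_unit hb1 hb2
  have hz : RatFunc.C ((n : ℝ)) ∈ Dress := by
    rw [map_intCast]
    exact intCast_mem Dress n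
  have := Subring.add_mem _ key hz
  rwa [← map_add, sub_add_cancel] at this

private lemma self_div_one_add_sq_mem (f : RatFunc ℝ) : f * (1 + f ^ 2)⁻¹ ∈ Dress := by
  have hC : RatFunc.C ((2 : ℝ)⁻¹) = (2 : RatFunc ℝ)⁻¹ := by
    rw [map_inv₀, map_ofNat]
  by_cases hf : 1 + f = 0
  · have hfe : f = -1 := by linear_combination hf
    rw [hfe]
    have h1 : (-1 : RatFunc ℝ) * (1 + (-1) ^ 2)⁻¹ = RatFunc.C (-(2⁻¹)) := by
      rw [map_neg, hC]; norm_num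
    rw [h1]; exact C_mem _
  · set g : RatFunc ℝ := (1 - f) / (1 + f) with hg
    have h2 : (1 + f ^ 2) ≠ 0 := one_add_sq_ne_zero_s10 f
    have h3 : (1 + g ^ 2) ≠ 0 := one_add_sq_ne_zero_s10 g
    have h2' : (2 : RatFunc ℝ) ≠ 0 := by
      rw [← map_ofNat (RatFunc.C (K := ℝ)) 2]
      exact (_root_.map_ne_zero _).mpr two_ne_zero
    have hgg : 1 + g ^ 2 = (2 * (1 + f ^ 2)) / (1 + f) ^ 2 := by
      rw [hg]; field_simp; ring
    have key : f * (1 + f ^ 2)⁻¹ = (1 + g ^ 2)⁻¹ - RatFunc.C 2⁻¹ := by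
      rw [hC, hgg]
      field_simp
      ring
    rw [key]
    exact Subring.sub_mem _ (gen_mem g) (C_mem _)


private lemma quad_ne_zero (a b : ℝ) (hb : b ≠ 0) :
    ((X - C a) ^ 2 + C (b ^ 2) : Polynomial ℝ) ≠ 0 := by
  intro h
  have := congrArg (eval a) h
  simp only [eval_add, eval_pow, eval_sub, eval_X, eval_C, eval_zero, sub_self] at this
  exact hb (by nlinarith)

private lemma quad_mem (a b : ℝ) (hb : b ≠ 0) :
    (φR ((X - C a) ^ 2 + C (b ^ 2)))⁻¹ ∈ Dress ∧
      φR X * (φR ((X - C a) ^ 2 + C (b ^ 2)))⁻¹ ∈ Dress := by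
  set d : Polynomial ℝ := (X - C a) ^ 2 + C (b ^ 2) with hd
  set P : RatFunc ℝ := φR (X - C a) with hP
  set B : RatFunc ℝ := RatFunc.C b with hB
  have hB0 : B ≠ 0 := by
    rw [hB]; exact (_root_.map_ne_zero _).mpr hb
  have hD : φR d = P ^ 2 + B ^ 2 := by
    rw [hd, hP, hB, map_add, map_pow, RatFunc.algebraMap_C, map_pow]
  have hD0 : φR d ≠ 0 := RatFunc.algebraMap_ne_zero (quad_ne_zero a b hb)
  set f : RatFunc ℝ := P / B with hf
  have hone : 1 + f ^ 2 = φR d / B ^ 2 := by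
    rw [hf, hD]; field_simp; ring
  have h1f : 1 + f ^ 2 ≠ 0 := one_add_sq_ne_zero_s10 f
  have E1 : (φR d)⁻¹ = RatFunc.C ((b ^ 2)⁻¹) * (1 + f ^ 2)⁻¹ := by
    rw [hone, map_inv₀, map_pow, ← hB]
    field_simp
  have mem1 : (φR d)⁻¹ ∈ Dress := by
    rw [E1]; exact Subring.mul_mem _ (C_mem _) (gen_mem f)
  refine ⟨mem1, ?_⟩
  have E2 : φR X * (φR d)⁻¹ =
      RatFunc.C b⁻¹ * (f * (1 + f ^ 2)⁻¹) + RatFunc.C a * (φR d)⁻¹ := by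
    have hX : φR X = P + RatFunc.C a := by
      rw [hP, map_sub, RatFunc.algebraMap_C]; ring
    rw [hX, hone, hf, map_inv₀, ← hB]
    field_simp
  rw [E2]
  exact Subring.add_mem _
    (Subring.mul_mem _ (C_mem _) (self_div_one_add_sq_mem f))
    (Subring.mul_mem _ (C_mem _) mem1)

private lemma linear_div_quad_mem (a b : ℝ) (hb : b ≠ 0) {r : Polynomial ℝ}
    (hr : r.degree ≤ 1) :
    φR r * (φR ((X - C a) ^ 2 + C (b ^ 2)))⁻¹ ∈ Dress := by
  obtain ⟨h1, h2⟩ := quad_mem a b hb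
  have hre : r = C (r.coeff 1) * X + C (r.coeff 0) := eq_X_add_C_of_degree_le_one hr
  have key : φR r * (φR ((X - C a) ^ 2 + C (b ^ 2)))⁻¹ =
      RatFunc.C (r.coeff 1) * (φR X * (φR ((X - C a) ^ 2 + C (b ^ 2)))⁻¹) +
        RatFunc.C (r.coeff 0) * (φR ((X - C a) ^ 2 + C (b ^ 2)))⁻¹ := by
    conv_lhs => rw [hre]
    rw [map_add, map_mul, RatFunc.algebraMap_C, RatFunc.algebraMap_C]
    ring
  rw [key]
  exact Subring.add_mem _ (Subring.mul_mem _ (C_mem _) h2) (Subring.mul_mem _ (C_mem _) h1)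


private lemma exists_quad_factor {q : Polynomial ℝ} (hq : ∀ t : ℝ, q.eval t ≠ 0)
    (hdeg : 0 < q.natDegree) :
    ∃ (a b : ℝ) (q₁ : Polynomial ℝ), b ≠ 0 ∧ q = ((X - C a) ^ 2 + C (b ^ 2)) * q₁ := by
  have hq0 : q ≠ 0 := fun h => hq 0 (by simp [h])
  have hdeg' : 0 < (q.map (algebraMap ℝ ℂ)).degree := by
    rw [degree_map_eq_of_injective (algebraMap ℝ ℂ).injective]
    exact natDegree_pos_iff_degree_pos.mp hdeg
  obtain ⟨z, hz⟩ := Complex.exists_root hdeg'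
  have hza : aeval z q = 0 := by
    rwa [aeval_def, eval₂_eq_eval_map]
  have him : z.im ≠ 0 := by
    intro h0
    apply hq z.re
    have hz' : z = algebraMap ℝ ℂ z.re := by
      apply Complex.ext <;> simp [h0]
    rw [hz', aeval_algebraMap_apply] at hza
    simpa using hza
  refine ⟨z.re, z.im, ?_⟩
  set d : Polynomial ℝ := (X - C z.re) ^ 2 + C (z.im ^ 2) with hd
  have hd_monic : d.Monic := by
    apply ((monic_X_sub_C z.re).pow 2).add_of_left
    rw [degree_pow, degree_X_sub_C]
    exact lt_of_le_of_lt (degree_C_le) (by norm_num)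
  have hd_nat : d.natDegree = 2 := by
    have : d.degree = 2 := by
      rw [hd, degree_add_eq_left_of_degree_lt, degree_pow, degree_X_sub_C]
      · norm_num
      · rw [degree_pow, degree_X_sub_C]
        exact lt_of_le_of_lt (degree_C_le) (by norm_num)
    exact natDegree_eq_of_degree_eq_some this
  have hdz : aeval z d = 0 := by
    rw [hd]
    simp only [map_add, map_pow, map_sub, aeval_X, aeval_C]
    have hzre : z - algebraMap ℝ ℂ z.re = Complex.I * (algebraMap ℝ ℂ z.im) := by
      apply Complex.ext <;> simp
    rw [hzre]
    have : (Complex.I * algebraMap ℝ ℂ z.im) ^ 2 = -(algebraMap ℝ ℂ z.im) ^ 2 := by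
      rw [mul_pow, Complex.I_sq]; ring
    rw [this]
    ring
  have hint : IsIntegral ℝ z := IsIntegral.of_finite ℝ z
  have hmd : minpoly ℝ z ∣ d := minpoly.dvd ℝ z hdz
  have hmq : minpoly ℝ z ∣ q := minpoly.dvd ℝ z hza
  have hmin_monic : (minpoly ℝ z).Monic := minpoly.monic hint
  have hd0 : d ≠ 0 := hd_monic.ne_zero
  have hle : (minpoly ℝ z).natDegree ≤ 2 := by
    have := natDegree_le_of_dvd hmd hd0
    omega
  have hpos : 0 < (minpoly ℝ z).natDegree := minpoly.natDegree_pos hint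
  have hne1 : (minpoly ℝ z).natDegree ≠ 1 := by
    intro h1
    have := hmin_monic.eq_X_add_C h1
    have hzz : aeval z (minpoly ℝ z) = 0 := minpoly.aeval ℝ z
    rw [this] at hzz
    simp only [map_add, aeval_X, aeval_C] at hzz
    have : z = -algebraMap ℝ ℂ ((minpoly ℝ z).coeff 0) := by linear_combination hzz
    apply him
    rw [this]
    simp
  have h2 : (minpoly ℝ z).natDegree = 2 := by omega
  have heq : minpoly ℝ z = d := by
    obtain ⟨u, hu⟩ := hmd
    have hu0 : u ≠ 0 := by
      intro h; rw [h, mul_zero] at hu; exact hd0 hu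
    have hund : u.natDegree = 0 := by
      have := congrArg natDegree hu
      rw [natDegree_mul (hmin_monic.ne_zero) hu0, h2, hd_nat] at this
      omega
    have huc : u = C (u.coeff 0) := eq_C_of_natDegree_eq_zero hund
    have hlc : u.coeff 0 = 1 := by
      have := congrArg leadingCoeff hu
      rw [leadingCoeff_mul, hmin_monic.leadingCoeff, hd_monic.leadingCoeff, one_mul] at this
      rw [huc] at this ⊢
      simpa using this.symm
    rw [hu, huc, hlc, map_one, mul_one]
  rw [← heq]
  obtain ⟨q₁, hq₁⟩ := hmq
  exact ⟨q₁, him, hq₁⟩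


private lemma ne_zero_of_no_root {q : Polynomial ℝ} (hq : ∀ t : ℝ, q.eval t ≠ 0) : q ≠ 0 :=
  fun h => hq 0 (by simp [h])

private lemma div_mem_const {q : Polynomial ℝ} (h0 : q.natDegree = 0)
    (hq : ∀ t : ℝ, q.eval t ≠ 0) {p : Polynomial ℝ} (hp : p.degree ≤ q.degree) :
    φR p / φR q ∈ Dress := by
  have hq0 : q ≠ 0 := ne_zero_of_no_root hq
  have hqC : q = C (q.coeff 0) := eq_C_of_natDegree_eq_zero h0
  have hdq : q.degree = 0 := by
    rw [degree_eq_natDegree hq0, h0]; rfl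
  have hpC : p = C (p.coeff 0) := eq_C_of_degree_le_zero (hdq ▸ hp)
  have key : φR p / φR q = RatFunc.C (p.coeff 0 / q.coeff 0) := by
    conv_lhs => rw [hpC, hqC]
    rw [RatFunc.algebraMap_C, RatFunc.algebraMap_C, map_div₀]
  rw [key]
  exact C_mem _

private lemma dress_div_mem : ∀ (n : ℕ) (q : Polynomial ℝ), q.natDegree ≤ n →
    (∀ t : ℝ, q.eval t ≠ 0) → ∀ p : Polynomial ℝ, p.degree ≤ q.degree →
    φR p / φR q ∈ Dress := by
  intro n
  induction n with
  | zero => exact fun q hqn hq p hp => div_mem_const (Nat.le_zero.mp hqn) hq hp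
  | succ n ih =>
    intro q hqn hq p hp
    by_cases h0 : q.natDegree = 0
    · exact div_mem_const h0 hq hp
    obtain ⟨a, b, q₁, hb, hfac⟩ := exists_quad_factor hq (Nat.pos_of_ne_zero h0)
    set d : Polynomial ℝ := (X - C a) ^ 2 + C (b ^ 2) with hdd
    have hd_monic : d.Monic := by
      apply ((monic_X_sub_C a).pow 2).add_of_left
      rw [degree_pow, degree_X_sub_C]
      exact lt_of_le_of_lt (degree_C_le) (by norm_num)
    have hd_nat : d.natDegree = 2 := by
      have hdeg : d.degree = 2 := by
        rw [hdd, degree_add_eq_left_of_degree_lt, degree_pow, degree_X_sub_C]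
        · norm_num
        · rw [degree_pow, degree_X_sub_C]
          exact lt_of_le_of_lt (degree_C_le) (by norm_num)
      exact natDegree_eq_of_degree_eq_some hdeg
    have hd0 : d ≠ 0 := hd_monic.ne_zero
    have hq0 : q ≠ 0 := ne_zero_of_no_root hq
    have hq₁0 : q₁ ≠ 0 := by
      intro h; rw [h, mul_zero] at hfac; exact hq0 hfac
    have hq₁ : ∀ t : ℝ, q₁.eval t ≠ 0 := by
      intro t ht
      exact hq t (by rw [hfac, eval_mul, ht, mul_zero])
    have hnd : q.natDegree = 2 + q₁.natDegree := by
      rw [hfac, natDegree_mul hd0 hq₁0, hd_nat]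
    have hq₁n : q₁.natDegree ≤ n := by omega
    set s : Polynomial ℝ := p /ₘ d with hs
    set r : Polynomial ℝ := p %ₘ d with hr
    have hrdeg : r.degree ≤ 1 := by
      have h2 : r.degree < 2 := by
        have := degree_modByMonic_lt p hd_monic
        rwa [degree_eq_natDegree hd0, hd_nat] at this
      by_cases hr0 : r = 0
      · rw [hr0]; simp
      · have h2' : r.degree < ((2 : ℕ) : WithBot ℕ) := by exact_mod_cast h2
        have h3 : r.natDegree < 2 := (natDegree_lt_iff_degree_lt hr0).mpr h2'
        calc r.degree ≤ (r.natDegree : WithBot ℕ) := degree_le_natDegree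
          _ ≤ ((1 : ℕ) : WithBot ℕ) := by exact_mod_cast (by omega : r.natDegree ≤ 1)
          _ ≤ 1 := by norm_num
    have hsdeg : s.degree ≤ q₁.degree := by
      by_cases hs0 : s = 0
      · rw [hs0]; simp
      have h1 : s.natDegree = p.natDegree - 2 := by
        rw [hs, natDegree_divByMonic p hd_monic, hd_nat]
      have h2 : p.natDegree ≤ q.natDegree := natDegree_le_natDegree hp
      have h3 : s.natDegree ≤ q₁.natDegree := by omega
      calc s.degree ≤ (s.natDegree : WithBot ℕ) := degree_le_natDegree
        _ ≤ (q₁.natDegree : WithBot ℕ) := by exact_mod_cast h3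
        _ = q₁.degree := (degree_eq_natDegree hq₁0).symm
    have hone : (1 : Polynomial ℝ).degree ≤ q₁.degree := by
      rw [degree_one]
      exact zero_le_degree_iff.mpr hq₁0
    have memA : φR s / φR q₁ ∈ Dress := ih q₁ hq₁n hq₁ s hsdeg
    have memB : φR r * (φR d)⁻¹ ∈ Dress := linear_div_quad_mem a b hb hrdeg
    have memC : φR 1 / φR q₁ ∈ Dress := ih q₁ hq₁n hq₁ 1 hone
    have hdne : φR d ≠ 0 := RatFunc.algebraMap_ne_zero hd0
    have hq₁ne : φR q₁ ≠ 0 := RatFunc.algebraMap_ne_zero hq₁0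
    have keyP : φR p = φR d * φR s + φR r := by
      rw [← map_mul, ← map_add]
      apply congrArg
      have := modByMonic_add_div p d
      linear_combination -this
    have keyQ : φR q = φR d * φR q₁ := by
      rw [← map_mul, hfac]
    have key : φR p / φR q = φR s / φR q₁ + (φR r * (φR d)⁻¹) * (φR 1 / φR q₁) := by
      rw [keyP, keyQ, map_one]
      field_simp
    rw [key]
    exact Subring.add_mem _ memA (Subring.mul_mem _ memB memC)


private lemma coeff_sq_add_sq_ne (p q : Polynomial ℝ) (hp : p ≠ 0)
    (h : q.natDegree ≤ p.natDegree) :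
    (p ^ 2 + q ^ 2).coeff (2 * p.natDegree) ≠ 0 := by
  rw [coeff_add, coeff_pow_mul_natDegree]
  have h2 : 0 ≤ (q ^ 2).coeff (2 * p.natDegree) := by
    rcases eq_or_lt_of_le h with h' | h'
    · rw [← h', coeff_pow_mul_natDegree]
      positivity
    · rw [coeff_eq_zero_of_natDegree_lt (lt_of_le_of_lt natDegree_pow_le (by omega))]
  have hlc : p.leadingCoeff ≠ 0 := leadingCoeff_ne_zero.mpr hp
  have h3 : (0 : ℝ) < p.leadingCoeff ^ 2 := by positivity
  exact ne_of_gt (add_pos_of_pos_of_nonneg h3 h2)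

private lemma degree_sq_le_sq_add_sq (p q : Polynomial ℝ) :
    (p ^ 2).degree ≤ (p ^ 2 + q ^ 2).degree := by
  by_cases hp : p = 0
  · simp [hp]
  rcases le_total q.natDegree p.natDegree with h | h
  · refine le_trans ?_ (le_degree_of_ne_zero (coeff_sq_add_sq_ne p q hp h))
    calc (p ^ 2).degree ≤ ((p ^ 2).natDegree : WithBot ℕ) := degree_le_natDegree
      _ ≤ ((2 * p.natDegree : ℕ) : WithBot ℕ) := by exact_mod_cast natDegree_pow_le
  · by_cases hq : q = 0
    · subst hq
      simp
    · have key := coeff_sq_add_sq_ne q p hq h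
      rw [add_comm (q ^ 2) (p ^ 2)] at key
      refine le_trans ?_ (le_degree_of_ne_zero key)
      calc (p ^ 2).degree ≤ ((p ^ 2).natDegree : WithBot ℕ) := degree_le_natDegree
        _ ≤ ((2 * q.natDegree : ℕ) : WithBot ℕ) := by
            exact_mod_cast le_trans natDegree_pow_le (by omega)

/-- The "bounded" predicate. -/
private def Good (r : RatFunc ℝ) : Prop :=
  ∃ p q : Polynomial ℝ, (∀ t : ℝ, q.eval t ≠ 0) ∧ p.degree ≤ q.degree ∧ r = φR p / φR q

private lemma good_gen (x : RatFunc ℝ) : Good ((1 + x ^ 2)⁻¹) := by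
  have hd : φR x.denom ≠ 0 := RatFunc.algebraMap_ne_zero x.denom_ne_zero
  have hroots : ∀ t : ℝ, (x.denom ^ 2 + x.num ^ 2).eval t ≠ 0 := by
    intro t ht
    simp only [eval_add, eval_pow] at ht
    have h1 : x.denom.eval t = 0 := by nlinarith [sq_nonneg (x.denom.eval t), sq_nonneg (x.num.eval t)]
    have h2 : x.num.eval t = 0 := by nlinarith [sq_nonneg (x.denom.eval t), sq_nonneg (x.num.eval t)]
    obtain ⟨uu, vv, huv⟩ := RatFunc.isCoprime_num_denom x
    have := congrArg (eval t) huv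
    simp only [eval_add, eval_mul, eval_one, h1, h2, mul_zero] at this
    norm_num at this
  refine ⟨x.denom ^ 2, x.denom ^ 2 + x.num ^ 2, hroots, degree_sq_le_sq_add_sq _ _, ?_⟩
  have hs : φR (x.denom ^ 2 + x.num ^ 2) ≠ 0 :=
    RatFunc.algebraMap_ne_zero (ne_zero_of_no_root hroots)
  have hx : x * φR x.denom = φR x.num := by
    have h' := div_mul_cancel₀ (φR x.num) hd
    rwa [RatFunc.num_div_denom] at h'
  have h1f : 1 + x ^ 2 ≠ 0 := one_add_sq_ne_zero_s10 x
  have expand : φR (x.denom ^ 2 + x.num ^ 2) = (1 + x ^ 2) * (φR x.denom) ^ 2 := by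
    rw [map_add, map_pow, map_pow, ← hx]; ring
  rw [eq_div_iff hs, expand, map_pow, inv_mul_cancel_left₀ h1f]


private lemma good_zero : Good 0 :=
  ⟨0, 1, fun t => by simp, by simp, by simp⟩

private lemma good_one : Good 1 :=
  ⟨1, 1, fun t => by simp, le_rfl, by simp⟩

private lemma good_neg {r : RatFunc ℝ} (h : Good r) : Good (-r) := by
  obtain ⟨p, q, hq, hd, he⟩ := h
  exact ⟨-p, q, hq, by rwa [degree_neg], by rw [he, map_neg, neg_div]⟩

private lemma good_add {r s : RatFunc ℝ} (h : Good r) (h' : Good s) : Good (r + s) := by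
  obtain ⟨p1, q1, hq1, hd1, he1⟩ := h
  obtain ⟨p2, q2, hq2, hd2, he2⟩ := h'
  have hq10 : q1 ≠ 0 := ne_zero_of_no_root hq1
  have hq20 : q2 ≠ 0 := ne_zero_of_no_root hq2
  refine ⟨p1 * q2 + p2 * q1, q1 * q2, ?_, ?_, ?_⟩
  · intro t ht
    rw [eval_mul] at ht
    exact (mul_ne_zero (hq1 t) (hq2 t)) ht
  · refine le_trans (degree_add_le _ _) (max_le ?_ ?_)
    · rw [degree_mul, degree_mul]
      exact add_le_add hd1 le_rfl
    · rw [degree_mul, degree_mul, add_comm q1.degree q2.degree]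
      exact add_le_add hd2 le_rfl
  · have e1 : φR q1 ≠ 0 := RatFunc.algebraMap_ne_zero hq10
    have e2 : φR q2 ≠ 0 := RatFunc.algebraMap_ne_zero hq20
    rw [he1, he2, map_add, map_mul, map_mul, map_mul]
    field_simp

private lemma good_mul {r s : RatFunc ℝ} (h : Good r) (h' : Good s) : Good (r * s) := by
  obtain ⟨p1, q1, hq1, hd1, he1⟩ := h
  obtain ⟨p2, q2, hq2, hd2, he2⟩ := h'
  refine ⟨p1 * p2, q1 * q2, ?_, ?_, ?_⟩
  · intro t ht
    rw [eval_mul] at ht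
    exact (mul_ne_zero (hq1 t) (hq2 t)) ht
  · rw [degree_mul, degree_mul]
    exact add_le_add hd1 hd2
  · rw [he1, he2, map_mul, map_mul, div_mul_div_comm]

private lemma good_of_mem {r : RatFunc ℝ} (hr : r ∈ Dress) : Good r := by
  induction hr using Subring.closure_induction with
  | mem x hx => obtain ⟨y, rfl⟩ := hx; exact good_gen y
  | zero => exact good_zero
  | one => exact good_one
  | add x y _ _ hx hy => exact good_add hx hy
  | neg x _ hx => exact good_neg hx
  | mul x y _ _ hx hy => exact good_mul hx hy

end DressAux

/-- An element `u` of the minimal Dress ring `D` of `ℝ(X)` is a unit of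
`D` iff `u = γ₁ / γ₂` for real polynomials `γ₁, γ₂` without real roots and of equal
degree. -/
theorem isUnit_minimalDressRing_ratFunc_iff (u : RatFunc ℝ)
    (hu : u ∈ Subring.closure {s : RatFunc ℝ | ∃ x : RatFunc ℝ, s = (1 + x ^ 2)⁻¹}) :
    (∃ v ∈ Subring.closure {s : RatFunc ℝ | ∃ x : RatFunc ℝ, s = (1 + x ^ 2)⁻¹},
        u * v = 1) ↔
      ∃ γ₁ γ₂ : Polynomial ℝ, (∀ t : ℝ, γ₁.eval t ≠ 0) ∧ (∀ t : ℝ, γ₂.eval t ≠ 0) ∧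
        γ₁.degree = γ₂.degree ∧
        u = algebraMap (Polynomial ℝ) (RatFunc ℝ) γ₁ /
            algebraMap (Polynomial ℝ) (RatFunc ℝ) γ₂ := by
  constructor
  · rintro ⟨v, hv, huv⟩
    obtain ⟨p1, q1, hq1, hd1, he1⟩ := good_of_mem hu
    obtain ⟨p2, q2, hq2, hd2, he2⟩ := good_of_mem hv
    have hq10 : q1 ≠ 0 := ne_zero_of_no_root hq1
    have hq20 : q2 ≠ 0 := ne_zero_of_no_root hq2
    have e1 : φR q1 ≠ 0 := RatFunc.algebraMap_ne_zero hq10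
    have e2 : φR q2 ≠ 0 := RatFunc.algebraMap_ne_zero hq20
    have hpp : φR (p1 * p2) = φR (q1 * q2) := by
      have h1 : (φR p1 / φR q1) * (φR p2 / φR q2) = 1 := by rw [← he1, ← he2]; exact huv
      rw [div_mul_div_comm, div_eq_one_iff_eq (mul_ne_zero e1 e2)] at h1
      rw [map_mul, map_mul]
      exact h1
    have hP : p1 * p2 = q1 * q2 := RatFunc.algebraMap_injective ℝ hpp
    have hq120 : q1 * q2 ≠ 0 := mul_ne_zero hq10 hq20
    have hp10 : p1 ≠ 0 := by
      intro h; rw [h, zero_mul] at hP; exact hq120 hP.symm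
    have hp20 : p2 ≠ 0 := by
      intro h; rw [h, mul_zero] at hP; exact hq120 hP.symm
    have hp1root : ∀ t : ℝ, p1.eval t ≠ 0 := by
      intro t ht
      have h := congrArg (Polynomial.eval t) hP
      rw [eval_mul, eval_mul, ht, zero_mul] at h
      exact (mul_ne_zero (hq1 t) (hq2 t)) h.symm
    have hnat : p1.natDegree + p2.natDegree = q1.natDegree + q2.natDegree := by
      have := congrArg Polynomial.natDegree hP
      rwa [Polynomial.natDegree_mul hp10 hp20, Polynomial.natDegree_mul hq10 hq20] at this
    have hn1 : p1.natDegree ≤ q1.natDegree := Polynomial.natDegree_le_natDegree hd1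
    have hn2 : p2.natDegree ≤ q2.natDegree := Polynomial.natDegree_le_natDegree hd2
    have heqn : p1.natDegree = q1.natDegree := by omega
    have hdeg : p1.degree = q1.degree := by
      rw [Polynomial.degree_eq_natDegree hp10, Polynomial.degree_eq_natDegree hq10, heqn]
    exact ⟨p1, q1, hp1root, hq1, hdeg, he1⟩
  · rintro ⟨γ1, γ2, h1, h2, hdeg, hequ⟩
    refine ⟨φR γ2 / φR γ1, ?_, ?_⟩
    · exact dress_div_mem γ1.natDegree γ1 le_rfl h1 γ2 (le_of_eq hdeg.symm)
    · have e1 : φR γ1 ≠ 0 := RatFunc.algebraMap_ne_zero (ne_zero_of_no_root h1)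
      have e2 : φR γ2 ≠ 0 := RatFunc.algebraMap_ne_zero (ne_zero_of_no_root h2)
      rw [hequ, div_mul_div_comm, mul_comm (φR γ1) (φR γ2), div_self (mul_ne_zero e2 e1)]
end

section
/- Let D be the minimal Dress ring of ℝ(X), and set a = X/(1+X^2) and b = (X^2−1)/(1+X^2), both elements of D. Then the ideal of D generated by a and b is all of D, yet for every z ∈ D the element a + b·z is not a unit of D. (Hence the Dedekind domain D does not have 1 in the stable range, although it has square stable range one.) -/
/-!
Every generator `(1 + x²)⁻¹` has no real pole, so `D` lies in the ring of rational functions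
without real poles, on which evaluation at each real `t` is a ring homomorphism depending
continuously on `t`. A unit of `D` therefore has no real zero. Since `4a² + b² = 1`, the ideal
`(a, b)` is everything; but `b` vanishes at `±1` while `a(±1) = ±1/2`, so every `a + bz` changes
sign on `[-1, 1]` and has a real zero by the intermediate value theorem.
-/

open Polynomial

namespace RatFunc

variable {K : Type*} [Field K]

theorem eval_denom_ne_zero_of_eq_div {f : RatFunc K} {p q : K[X]} {t : K} (hq : q.eval t ≠ 0)
    (hf : f = algebraMap K[X] (RatFunc K) p / algebraMap K[X] (RatFunc K) q) :
    f.denom.eval t ≠ 0 := by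
  have hq0 : q ≠ 0 := by rintro rfl; simp at hq
  exact fun h => hq (eval_eq_zero_of_dvd_of_eval_eq_zero ((denom_dvd hq0).2 ⟨p, hf⟩) h)

theorem eval_id_div_algebraMap {p q : K[X]} {t : K} (hq : q.eval t ≠ 0) :
    eval (RingHom.id K) t (algebraMap K[X] (RatFunc K) p / algebraMap K[X] (RatFunc K) q) =
      p.eval t / q.eval t := by
  have hq0 : q ≠ 0 := by rintro rfl; simp at hq
  have hmul := eval_mul (RingHom.id K) t (eval_denom_ne_zero_of_eq_div (p := p) hq rfl)
    (y := algebraMap K[X] (RatFunc K) q) (by simp)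
  rw [div_mul_cancel₀ _ (algebraMap_ne_zero hq0)] at hmul
  simp only [eval_algebraMap, Algebra.algebraMap_self, RingHom.id_apply, eval₂_id] at hmul
  rw [eq_div_iff hq, hmul]

theorem one_add_X_sq_ne_zero : (1 + X ^ 2 : RatFunc K) ≠ 0 := by
  simpa [add_comm] using algebraMap_ne_zero (K := K) (X_pow_add_C_ne_zero two_pos 1)

variable (K) in
def poleFreeSubring : Subring (RatFunc K) where
  carrier := {f | ∀ t : K, f.denom.eval t ≠ 0}
  one_mem' := by simp
  zero_mem' := by simp
  mul_mem' {f g} hf hg t h := by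
    simpa [hf t, hg t] using eval_eq_zero_of_dvd_of_eval_eq_zero (denom_mul_dvd f g) h
  add_mem' {f g} hf hg t h := by
    simpa [hf t, hg t] using eval_eq_zero_of_dvd_of_eval_eq_zero (denom_add_dvd f g) h
  neg_mem' {f} hf t := eval_denom_ne_zero_of_eq_div (hf t) (p := -f.num) (by
    rw [map_neg, neg_div, num_div_denom])

theorem mem_poleFreeSubring_of_eq_div {f : RatFunc K} {p q : K[X]} (hq : ∀ t, q.eval t ≠ 0)
    (hf : f = algebraMap K[X] (RatFunc K) p / algebraMap K[X] (RatFunc K) q) :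
    f ∈ poleFreeSubring K :=
  fun t => eval_denom_ne_zero_of_eq_div (hq t) hf

theorem inv_one_add_sq_mem_poleFreeSubring [LinearOrder K] [IsStrictOrderedRing K]
    (x : RatFunc K) : (1 + x ^ 2)⁻¹ ∈ poleFreeSubring K := by
  have hsum : ∀ t : K, (x.denom ^ 2 + x.num ^ 2).eval t ≠ 0 := by
    intro t ht
    simp only [Polynomial.eval_add, Polynomial.eval_pow] at ht
    obtain ⟨hd, hn⟩ := (add_eq_zero_iff_of_nonneg (sq_nonneg _) (sq_nonneg _)).1 ht
    obtain ⟨u, v, huv⟩ := isCoprime_num_denom x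
    simpa [sq_eq_zero_iff.1 hd, sq_eq_zero_iff.1 hn] using congrArg (Polynomial.eval t) huv
  -- with `x = n / d` in lowest terms, `(1 + x²)⁻¹ = d² / (d² + n²)`
  refine mem_poleFreeSubring_of_eq_div (p := x.denom ^ 2) hsum ?_
  have hs : algebraMap K[X] (RatFunc K) (x.denom ^ 2 + x.num ^ 2) ≠ 0 :=
    algebraMap_ne_zero fun h => hsum 0 (by rw [h, Polynomial.eval_zero])
  have hd : algebraMap K[X] (RatFunc K) x.denom ≠ 0 := algebraMap_ne_zero x.denom_ne_zero
  have hx := (num_div_denom x).symm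
  simp only [map_add, map_pow] at hs ⊢
  set n := algebraMap K[X] (RatFunc K) x.num
  set d := algebraMap K[X] (RatFunc K) x.denom
  rw [hx, eq_div_iff hs]
  field_simp

variable (K) in
noncomputable def poleFreeEval (t : K) : poleFreeSubring K →+* K where
  toFun f := eval (RingHom.id K) t f
  map_one' := eval_one _ _
  map_zero' := eval_zero _ _
  map_add' f g := eval_add _ _ (f.2 t) (g.2 t)
  map_mul' f g := eval_mul _ _ (f.2 t) (g.2 t)

theorem continuous_poleFreeEval [TopologicalSpace K] [IsTopologicalDivisionRing K]
    (f : poleFreeSubring K) : Continuous fun t => poleFreeEval K t f :=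
  f.1.num.continuous.div f.1.denom.continuous f.2

theorem not_isUnit_of_poleFreeEval_neg_of_pos {f : poleFreeSubring ℝ} {s t : ℝ}
    (hs : poleFreeEval ℝ s f < 0) (ht : 0 < poleFreeEval ℝ t f) : ¬ IsUnit f := by
  intro hf
  obtain ⟨c, -, hc⟩ := intermediate_value_uIcc (continuous_poleFreeEval f).continuousOn
    (Set.mem_uIcc.2 (Or.inl ⟨hs.le, ht.le⟩))
  exact (hf.map (poleFreeEval ℝ c)).ne_zero hc

end RatFunc

open RatFunc

/-- In the minimal Dress ring `D` of `ℝ(X)`, with `a = X/(1+X²)` and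
`b = (X²−1)/(1+X²)`, the ideal `(a, b)` is all of `D`, yet `a + b·z` is not a unit of `D`
for any `z ∈ D`.  (`D` does not have `1` in the stable range.) -/
theorem minimalDressRing_not_stable_range_one
    (ha : RatFunc.X / (1 + RatFunc.X ^ 2)
      ∈ Subring.closure {s : RatFunc ℝ | ∃ x : RatFunc ℝ, s = (1 + x ^ 2)⁻¹})
    (hb : (RatFunc.X ^ 2 - 1) / (1 + RatFunc.X ^ 2)
      ∈ Subring.closure {s : RatFunc ℝ | ∃ x : RatFunc ℝ, s = (1 + x ^ 2)⁻¹}) :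
    Ideal.span {(⟨_, ha⟩ :
        ↥(Subring.closure {s : RatFunc ℝ | ∃ x : RatFunc ℝ, s = (1 + x ^ 2)⁻¹})),
      ⟨_, hb⟩} = ⊤ ∧
    ∀ z : ↥(Subring.closure {s : RatFunc ℝ | ∃ x : RatFunc ℝ, s = (1 + x ^ 2)⁻¹}),
      ¬ IsUnit ((⟨_, ha⟩ :
          ↥(Subring.closure {s : RatFunc ℝ | ∃ x : RatFunc ℝ, s = (1 + x ^ 2)⁻¹}))
        + ⟨_, hb⟩ * z) := by
  set D := Subring.closure {s : RatFunc ℝ | ∃ x : RatFunc ℝ, s = (1 + x ^ 2)⁻¹}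
  set a : D := ⟨_, ha⟩
  set b : D := ⟨_, hb⟩
  have hD : D ≤ poleFreeSubring ℝ :=
    Subring.closure_le.2 fun _ ⟨x, hx⟩ => hx ▸ inv_one_add_sq_mem_poleFreeSubring x
  constructor
  · have hab : 4 * a * a + b * b = 1 := by
      ext
      push_cast [a, b]
      rw [show ((4 : D) : RatFunc ℝ) = 4 from map_ofNat D.subtype 4]
      field_simp [one_add_X_sq_ne_zero]
      ring
    rw [Ideal.eq_top_iff_one, ← hab]
    exact add_mem (Ideal.mul_mem_left _ _ (Ideal.subset_span (by simp)))
      (Ideal.mul_mem_left _ _ (Ideal.subset_span (by simp)))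
  · intro z hz
    have hq (t : ℝ) : (1 + Polynomial.X ^ 2 : ℝ[X]).eval t ≠ 0 := by simp; positivity
    have eval_a (t : ℝ) : poleFreeEval ℝ t (Subring.inclusion hD a) = t / (1 + t ^ 2) := by
      change eval (RingHom.id ℝ) t (RatFunc.X / (1 + RatFunc.X ^ 2)) = _
      rw [← algebraMap_X, ← map_one (algebraMap ℝ[X] _), ← map_pow, ← map_add,
        eval_id_div_algebraMap (hq t)]
      simp
    have eval_b (t : ℝ) :
        poleFreeEval ℝ t (Subring.inclusion hD b) = (t ^ 2 - 1) / (1 + t ^ 2) := by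
      change eval (RingHom.id ℝ) t ((RatFunc.X ^ 2 - 1) / (1 + RatFunc.X ^ 2)) = _
      rw [← algebraMap_X, ← map_one (algebraMap ℝ[X] _), ← map_pow, ← map_add, ← map_sub,
        eval_id_div_algebraMap (hq t)]
      simp
    refine not_isUnit_of_poleFreeEval_neg_of_pos (s := -1) (t := 1) ?_ ?_
      (hz.map (Subring.inclusion hD))
    · simp only [map_add, map_mul, eval_a, eval_b]; norm_num
    · simp only [map_add, map_mul, eval_a, eval_b]; norm_num
end

section
/- Let R be a commutative integral domain and p, q ∈ R. The 2×2 matrix with first row (p, q) and second row (0, 0) is a product of idempotent 2×2 matrices over R if and only if the matrix with first row (q, p) and second row (0, 0) is a product of idempotent 2×2 matrices over R. -/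
/-!
Reindexing by the transposition of `Fin 2` is a ring automorphism of the matrix ring, so it
preserves products of idempotents; it sends `!![p, q; 0, 0]` to `!![0, 0; q, p]`, and left
multiplication by the idempotent `!![1, 1; 0, 0]` then yields `!![q, p; 0, 0]`.
-/

open Matrix

theorem map_mem_closure_idempotents {M N F : Type*} [Monoid M] [Monoid N] [FunLike F M N]
    [MonoidHomClass F M N] (f : F) {x : M} (hx : x ∈ Submonoid.closure {e : M | e * e = e}) :
    f x ∈ Submonoid.closure {e : N | e * e = e} := by
  have hle : Submonoid.closure {e : M | e * e = e} ≤
      (Submonoid.closure {e : N | e * e = e}).comap f :=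
    Submonoid.closure_le.2 fun e (he : e * e = e) =>
      Submonoid.subset_closure (show f e * f e = f e by rw [← map_mul, he])
  exact hle hx

theorem Matrix.isIdempotentElem_fin_two_one_one_zero_zero {R : Type*} [Semiring R] :
    IsIdempotentElem !![(1 : R), 1; 0, 0] := by
  ext i j
  fin_cases i <;> fin_cases j <;> simp [mul_apply, Fin.sum_univ_two]

theorem Matrix.eq_mul_reindex_swap_fin_two {R : Type*} [Semiring R] (p q : R) :
    !![q, p; 0, 0] =
      !![1, 1; 0, 0] * reindexRingEquiv R (Equiv.swap (0 : Fin 2) 1) !![p, q; 0, 0] := by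
  ext i j
  fin_cases i <;> fin_cases j <;> simp [mul_apply, Fin.sum_univ_two]

theorem Matrix.swap_row_mem_closure_idempotents {R : Type*} [Semiring R] {p q : R}
    (h : !![p, q; 0, 0] ∈ Submonoid.closure {E : Matrix (Fin 2) (Fin 2) R | E * E = E}) :
    !![q, p; 0, 0] ∈ Submonoid.closure {E : Matrix (Fin 2) (Fin 2) R | E * E = E} := by
  rw [eq_mul_reindex_swap_fin_two]
  exact Submonoid.mul_mem _ (Submonoid.subset_closure isIdempotentElem_fin_two_one_one_zero_zero)
    (map_mem_closure_idempotents _ h)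

theorem matrix_pq_prod_idempotents_iff_qp_general (R : Type*) [CommRing R]
    (p q : R) :
    !![p, q; 0, 0] ∈ Submonoid.closure {E : Matrix (Fin 2) (Fin 2) R | E * E = E} ↔
    !![q, p; 0, 0] ∈ Submonoid.closure {E : Matrix (Fin 2) (Fin 2) R | E * E = E} :=
  ⟨swap_row_mem_closure_idempotents, swap_row_mem_closure_idempotents⟩

/-- Over a commutative integral domain `R`, the matrix `!![p, q; 0, 0]`
is a product of idempotent `2×2` matrices iff `!![q, p; 0, 0]` is. -/
theorem matrix_pq_prod_idempotents_iff_qp (R : Type*) [CommRing R] [IsDomain R]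
    (p q : R) :
    !![p, q; 0, 0] ∈ Submonoid.closure {E : Matrix (Fin 2) (Fin 2) R | E * E = E} ↔
    !![q, p; 0, 0] ∈ Submonoid.closure {E : Matrix (Fin 2) (Fin 2) R | E * E = E} :=
  matrix_pq_prod_idempotents_iff_qp_general R p q
end

section
/- Let x, y be nonzero real polynomials with deg x = deg y. Assume that either y(u) > 0 for every real root u of x, or y(u) < 0 for every real root u of x. Then there exists a real polynomial β with no real roots (β(t) ≠ 0 for all t ∈ ℝ) such that the polynomial δ = x^2 + y·β satisfies δ(t) > 0 for all t ∈ ℝ, and deg x − 1 ≤ deg β ≤ deg x, with deg δ = 2·deg x. -/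
open Filter Polynomial

/-- A polynomial of even degree with positive leading coefficient is eventually
nonnegative outside a large interval. -/
lemma aux_even (P : Polynomial ℝ) (n : ℕ) (hd : P.natDegree = 2*n)
    (hc : 0 < P.coeff (2*n)) :
    ∃ R > (0:ℝ), ∀ t : ℝ, R ≤ |t| → 0 ≤ P.eval t := by
  have hlc : 0 < P.leadingCoeff := by rwa [leadingCoeff, hd]
  rcases Nat.eq_zero_or_pos n with hn | hn
  · subst hn
    refine ⟨1, one_pos, fun t _ => ?_⟩
    rw [P.eq_C_of_natDegree_eq_zero (by simpa using hd), eval_C]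
    simpa using hc.le
  · have hdegpos : 0 < P.degree := by
      rw [← natDegree_pos_iff_degree_pos, hd]; omega
    have h1 : Tendsto (fun x => eval x P) atTop atTop :=
      P.tendsto_atTop_of_leadingCoeff_nonneg hdegpos hlc.le
    set Q : Polynomial ℝ := P.comp (-X) with hQ
    have hQeval : ∀ t : ℝ, Q.eval t = P.eval (-t) := by
      intro t; simp [hQ]
    have hQdeg : Q.natDegree = P.natDegree := by
      rw [hQ, natDegree_comp]; simp
    have hQlc : Q.leadingCoeff = P.leadingCoeff := by
      rw [hQ, leadingCoeff_comp (by simp)]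
      simp [hd, pow_mul]
    have hQdegpos : 0 < Q.degree := by
      rw [← natDegree_pos_iff_degree_pos, hQdeg, hd]; omega
    have h2 : Tendsto (fun x => eval x Q) atTop atTop :=
      Q.tendsto_atTop_of_leadingCoeff_nonneg hQdegpos (hQlc ▸ hlc.le)
    obtain ⟨R₁, hR₁⟩ := (h1.eventually_ge_atTop 0).exists_forall_of_atTop
    obtain ⟨R₂, hR₂⟩ := (h2.eventually_ge_atTop 0).exists_forall_of_atTop
    refine ⟨max 1 (max R₁ R₂), by positivity, fun t ht => ?_⟩
    rcases le_total 0 t with h | h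
    · rw [abs_of_nonneg h] at ht
      exact hR₁ t (le_trans (le_trans (le_max_left _ _) (le_max_right _ _)) ht)
    · rw [abs_of_nonpos h] at ht
      have := hR₂ (-t) (le_trans (le_trans (le_max_right _ _) (le_max_right _ _)) ht)
      rw [hQeval] at this
      simpa using this

lemma aux_compact (f g : ℝ → ℝ) (hf : Continuous f) (hg : Continuous g)
    (hf0 : ∀ t, 0 ≤ f t) (hroot : ∀ t, f t = 0 → 0 < g t) (R : ℝ) :
    ∃ ε > (0:ℝ), ∀ e : ℝ, 0 < e → e ≤ ε → ∀ t : ℝ, |t| ≤ R → 0 < f t + e * g t := by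
  set A : Set ℝ := Set.Icc (-R) R ∩ g ⁻¹' Set.Iic 0 with hA
  have hAcomp : IsCompact A := isCompact_Icc.inter_right (isClosed_Iic.preimage hg)
  by_cases hne : A.Nonempty
  · obtain ⟨t₀, ht₀, hmin⟩ := hAcomp.exists_isMinOn hne hf.continuousOn
    obtain ⟨t₁, ht₁, hming⟩ := hAcomp.exists_isMinOn hne hg.continuousOn
    have ha : 0 < f t₀ := by
      rcases (hf0 t₀).lt_or_eq with h | h
      · exact h
      · exact absurd (hroot t₀ h.symm) (not_lt.mpr ht₀.2)
    have hb : g t₁ ≤ 0 := ht₁.2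
    refine ⟨f t₀ / (2 * (-g t₁ + 1)), div_pos ha (by linarith), fun e he hee t ht => ?_⟩
    by_cases hgt : g t ≤ 0
    · have htA : t ∈ A := ⟨Set.mem_Icc.mpr (abs_le.mp ht), hgt⟩
      have h1 : f t₀ ≤ f t := hmin htA
      have h2 : g t₁ ≤ g t := hming htA
      have h3 : e * g t₁ ≤ e * g t := by nlinarith
      have h4 : e * (-g t₁) ≤ (f t₀ / (2 * (-g t₁ + 1))) * (-g t₁) := by
        apply mul_le_mul_of_nonneg_right hee (by linarith)
      have h5 : (f t₀ / (2 * (-g t₁ + 1))) * (-g t₁) < f t₀ := by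
        rw [div_mul_eq_mul_div, div_lt_iff₀ (by linarith)]
        nlinarith
      nlinarith
    · push_neg at hgt
      have := hf0 t
      nlinarith
  · refine ⟨1, one_pos, fun e he hee t ht => ?_⟩
    have hgt : 0 < g t := by
      by_contra h
      exact hne ⟨t, ⟨Set.mem_Icc.mpr (abs_le.mp ht), by simpa using not_lt.mp h⟩⟩
    have := hf0 t
    nlinarith

open Filter Polynomial


set_option maxHeartbeats 1000000 in
/-- If `x, y` are nonzero real polynomials of equal degree and `y` has
constant sign on the real roots of `x`, then there is a real polynomial `β` without real
roots such that `δ = x² + y·β` is everywhere positive, with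
`deg x − 1 ≤ deg β ≤ deg x` and `deg δ = 2·deg x`. -/
theorem exists_beta_sq_add_mul_pos (x y : Polynomial ℝ) (hx : x ≠ 0) (hy : y ≠ 0)
    (hdeg : x.natDegree = y.natDegree)
    (hsign : (∀ u : ℝ, x.eval u = 0 → 0 < y.eval u) ∨
             (∀ u : ℝ, x.eval u = 0 → y.eval u < 0)) :
    ∃ β : Polynomial ℝ, (∀ t : ℝ, β.eval t ≠ 0) ∧
      (∀ t : ℝ, 0 < (x ^ 2 + y * β).eval t) ∧
      x.natDegree - 1 ≤ β.natDegree ∧ β.natDegree ≤ x.natDegree ∧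
      (x ^ 2 + y * β).natDegree = 2 * x.natDegree := by
  obtain ⟨σ, hσpm, hσ⟩ : ∃ σ : ℝ, (σ = 1 ∨ σ = -1) ∧
      ∀ u : ℝ, x.eval u = 0 → 0 < σ * y.eval u := by
    rcases hsign with h | h
    · exact ⟨1, Or.inl rfl, fun u hu => by simpa using h u hu⟩
    · exact ⟨-1, Or.inr rfl, fun u hu => by have := h u hu; nlinarith⟩
  have hσ0 : σ ≠ 0 := by rcases hσpm with h | h <;> simp [h]
  have hσabs : |σ| = 1 := by rcases hσpm with h | h <;> simp [h]
  set n := x.natDegree with hn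
  by_cases hn0 : n = 0
  · -- constant case
    have hxC : x = C (x.coeff 0) := x.eq_C_of_natDegree_eq_zero hn0
    have hyC : y = C (y.coeff 0) := y.eq_C_of_natDegree_eq_zero (by omega)
    set c := x.coeff 0 with hc'
    set d := y.coeff 0 with hd'
    have hc : c ≠ 0 := fun h => hx (by rw [hxC, h, map_zero])
    have hd : d ≠ 0 := fun h => hy (by rw [hyC, h, map_zero])
    refine ⟨C (c^2/(2*d)), ?_, ?_, ?_, ?_, ?_⟩
    · intro t
      simp only [eval_C]
      exact div_ne_zero (pow_ne_zero 2 hc) (by simpa using hd)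
    · intro t
      have heq : (x^2 + y * C (c^2/(2*d))).eval t = c^2 + c^2/2 := by
        rw [hxC, hyC]
        simp only [eval_add, eval_mul, eval_pow, eval_C]
        field_simp
      rw [heq]
      positivity
    · rw [natDegree_C]; omega
    · rw [natDegree_C]; omega
    · have hle : (x^2 + y * C (c^2/(2*d))).natDegree ≤ 0 := by
        refine le_trans (natDegree_add_le _ _) ?_
        rw [max_le_iff]
        constructor
        · rw [natDegree_pow]; omega
        · refine le_trans (natDegree_mul_le) ?_
          rw [natDegree_C]; omega
      omega
  · -- main case
    have hnpos : 0 < n := Nat.pos_of_ne_zero hn0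
    set m := n / 2 with hm
    set w : Polynomial ℝ := (X^2 + 1)^m with hwdef
    have hXmonic : ((X:Polynomial ℝ)^2 + 1).Monic := by
      have h1 : ((X:Polynomial ℝ)^2 + 1) = X^2 + C 1 := by rw [map_one]
      rw [h1]
      refine (monic_X_pow 2).add_of_left ?_
      rw [degree_X_pow]
      exact lt_of_le_of_lt (degree_C_le) (by norm_num)
    have hwmonic : w.Monic := hXmonic.pow m
    have hwne : w ≠ 0 := hwmonic.ne_zero
    have hX2deg : ((X:Polynomial ℝ)^2 + 1).natDegree = 2 := by
      have h1 : ((X:Polynomial ℝ)^2 + 1) = X^2 + C 1 := by rw [map_one]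
      rw [h1, natDegree_X_pow_add_C]
    have hwdeg : w.natDegree = 2*m := by
      rw [hwdef, natDegree_pow, hX2deg]; ring
    have hwevalpos : ∀ t : ℝ, 0 < (t^2+1)^m := fun t => by positivity
    set L := x.leadingCoeff with hL
    have hLne : L ≠ 0 := leadingCoeff_ne_zero.mpr hx
    have hL2 : 0 < L^2 := by positivity
    set Ly := y.leadingCoeff with hLy
    have hywdeg : (y*w).natDegree = n + 2*m := by
      rw [natDegree_mul hy hwne, ← hdeg, hwdeg]
    have hywcoeff : |(y*w).coeff (2*n)| ≤ |Ly| := by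
      by_cases hcase : n + 2*m = 2*n
      · have h2n : 2*n = (y*w).natDegree := by omega
        rw [h2n, coeff_natDegree, leadingCoeff_mul, hwmonic.leadingCoeff, mul_one]
      · have h0 : (y*w).coeff (2*n) = 0 :=
          coeff_eq_zero_of_natDegree_lt (by omega)
        rw [h0]
        simp
    have hx2deg : (x^2).natDegree = 2*n := by rw [natDegree_pow]
    have hx2coeff : (x^2).coeff (2*n) = L^2 := by
      rw [show 2*n = (x^2).natDegree from hx2deg.symm, coeff_natDegree, leadingCoeff_pow]
    set ε₀ := L^2 / (4*(|Ly|+1)) with hε₀def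
    have hε₀ : 0 < ε₀ := div_pos hL2 (by positivity)
    have hε₀Ly : ε₀ * |Ly| ≤ L^2/4 := by
      have h4 : (0:ℝ) < 4*(|Ly|+1) := by positivity
      have hkey : ε₀ * (4*(|Ly|+1)) = L^2 := div_mul_cancel₀ _ (ne_of_gt h4)
      nlinarith [abs_nonneg Ly, hε₀.le]
    set H := C (1/2 : ℝ) * x^2 + C (σ*ε₀) * (y*w) with hHdef
    have hHcoeff : 0 < H.coeff (2*n) := by
      rw [hHdef, coeff_add, coeff_C_mul, coeff_C_mul, hx2coeff]
      have h1 : |σ*ε₀*(y*w).coeff (2*n)| ≤ ε₀*|Ly| := by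
        rw [abs_mul, abs_mul, hσabs, one_mul, abs_of_pos hε₀]
        exact mul_le_mul_of_nonneg_left hywcoeff hε₀.le
      have h2 := (abs_le.mp h1).1
      nlinarith
    have hHdeg : H.natDegree = 2*n := by
      refine natDegree_eq_of_le_of_coeff_ne_zero ?_ (ne_of_gt hHcoeff)
      refine le_trans (natDegree_add_le _ _) ?_
      rw [max_le_iff]
      constructor
      · exact le_trans (natDegree_C_mul_le _ _) (by rw [hx2deg])
      · exact le_trans (natDegree_C_mul_le _ _) (by rw [hywdeg]; omega)
    obtain ⟨R, hRpos, hR⟩ := aux_even H n hHdeg hHcoeff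
    have hHeval : ∀ t : ℝ, H.eval t =
        (1/2)*(x.eval t)^2 + ε₀*(σ*(y.eval t)*(t^2+1)^m) := by
      intro t
      rw [hHdef]
      simp only [eval_add, eval_mul, eval_pow, eval_C, eval_X, eval_one, hwdef]
      ring
    obtain ⟨ε₁, hε₁, hcomp⟩ := aux_compact (fun t => (x.eval t)^2)
      (fun t => σ * (y.eval t) * (t^2+1)^m)
      ((x.continuous).pow 2)
      ((continuous_const.mul y.continuous).mul
        (((continuous_pow 2).add continuous_const).pow m))
      (fun t => sq_nonneg _)
      (fun t h => by
        have hx0 : x.eval t = 0 := sq_eq_zero_iff.mp h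
        exact mul_pos (hσ t hx0) (hwevalpos t))
      R
    set ε := min ε₀ ε₁ with hεdef
    have hεpos : 0 < ε := lt_min hε₀ hε₁
    have hεne : σ * ε ≠ 0 := mul_ne_zero hσ0 (ne_of_gt hεpos)
    refine ⟨C (σ*ε) * w, ?_, ?_, ?_, ?_, ?_⟩
    · intro t
      have heq : (C (σ*ε) * w).eval t = σ*ε*(t^2+1)^m := by
        simp [hwdef]
      rw [heq]
      exact mul_ne_zero hεne (ne_of_gt (hwevalpos t))
    · intro t
      have heq : (x^2 + y*(C (σ*ε)*w)).eval t =
          (x.eval t)^2 + ε*(σ*(y.eval t)*(t^2+1)^m) := by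
        simp only [eval_add, eval_mul, eval_pow, eval_C, eval_X, eval_one, hwdef]
        ring
      rw [heq]
      rcases le_or_gt R |t| with hout | hin
      · have h0 := hR t hout
        rw [hHeval t] at h0
        rcases le_or_gt 0 (σ*(y.eval t)*(t^2+1)^m) with hg | hg
        · by_cases hx0 : x.eval t = 0
          · have hgpos : 0 < σ*(y.eval t)*(t^2+1)^m := mul_pos (hσ t hx0) (hwevalpos t)
            have := mul_pos hεpos hgpos
            nlinarith [sq_nonneg (x.eval t)]
          · have hf : 0 < (x.eval t)^2 := by positivity
            nlinarith [mul_nonneg hεpos.le hg]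
        · have hx0 : x.eval t ≠ 0 := fun h =>
            absurd (mul_pos (hσ t h) (hwevalpos t)) (not_lt.mpr hg.le)
          have hf : 0 < (x.eval t)^2 := by positivity
          have hεle : ε ≤ ε₀ := min_le_left _ _
          have h1 : ε₀ * (σ*(y.eval t)*(t^2+1)^m) ≤ ε * (σ*(y.eval t)*(t^2+1)^m) := by
            nlinarith
          linarith
      · exact hcomp ε hεpos (min_le_right _ _) t hin.le
    · rw [natDegree_C_mul hεne, hwdeg]; omega
    · rw [natDegree_C_mul hεne, hwdeg]; omega
    · have hrw : y * (C (σ*ε) * w) = C (σ*ε) * (y*w) := by ring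
      have hcoeffδ : 0 < (x^2 + y*(C (σ*ε)*w)).coeff (2*n) := by
        rw [hrw, coeff_add, coeff_C_mul, hx2coeff]
        have h1 : |σ*ε*(y*w).coeff (2*n)| ≤ ε₀*|Ly| := by
          rw [abs_mul, abs_mul, hσabs, one_mul, abs_of_pos hεpos]
          exact mul_le_mul (min_le_left _ _) hywcoeff (abs_nonneg _) hε₀.le
        have h2 := (abs_le.mp h1).1
        nlinarith
      refine natDegree_eq_of_le_of_coeff_ne_zero ?_ (ne_of_gt hcoeffδ)
      refine le_trans (natDegree_add_le _ _) ?_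
      rw [max_le_iff]
      constructor
      · omega
      · refine le_trans natDegree_mul_le ?_
        rw [natDegree_C_mul hεne, hwdeg, ← hdeg]
        omega
end

section
/- Let x, y be nonzero real polynomials with deg x = deg y. Assume that either x(z) > 0 for every real root z of y, or x(z) < 0 for every real root z of y. Then there exists a real polynomial η with no real roots (η(t) ≠ 0 for all t ∈ ℝ) such that the polynomial δ = x·η + y^2 satisfies δ(t) > 0 for all t ∈ ℝ, and deg y − 1 ≤ deg η ≤ deg y, with deg δ = 2·deg y. -/
open Polynomial Filter Topology

/-! With `n = deg y`, the polynomial `q = (X² + 1) ^ (n / 2)` is positive of degree `n` or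
`n - 1`, and `η = q / c` works as soon as `x q + c y²` is positive of degree `2n`. A large `c`
makes the coefficient of `t ^ (2n)` positive, so `x q + c y²` is positive off a compact set `K`.
On the part of `K` where it is not positive, `y²` is bounded away from `0` because `x q > 0` at
the real roots of `y`; enlarging `c` once more makes it positive everywhere. When `x < 0` at
the roots of `y`, apply this to `-x` and take `-η`. -/

theorem exists_nonneg_add_mul_pos_of_eventually_pos {X : Type*} [TopologicalSpace X]
    {f g : X → ℝ} (hf : Continuous f) (hg : Continuous g) (hg0 : ∀ t, 0 ≤ g t)
    (hfg : ∀ t, g t = 0 → 0 < f t) (hcocompact : ∀ᶠ t in cocompact X, 0 < f t) :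
    ∃ c, 0 ≤ c ∧ ∀ t, 0 < f t + c * g t := by
  obtain ⟨K, hK, hfK⟩ := hasBasis_cocompact.eventually_iff.mp hcocompact
  set S := K ∩ {t | f t ≤ 0}
  have hgS : ∀ t ∈ S, g t ≠ 0 := fun t ht h0 => (hfg t h0).not_ge ht.2
  obtain ⟨M, hM⟩ := (hK.inter_right (isClosed_le hf continuous_const)).bddAbove_image
    (hf.neg.continuousOn.div hg.continuousOn hgS)
  refine ⟨max M 0 + 1, by positivity, fun t => ?_⟩
  by_cases ht : t ∈ S
  · have hgt : 0 < g t := (hg0 t).lt_of_ne' (hgS t ht)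
    have hbound : -f t ≤ M * g t := (div_le_iff₀ hgt).mp (hM ⟨t, ht, rfl⟩)
    nlinarith [le_max_left M 0]
  · have hft : 0 < f t := by
      by_cases htK : t ∈ K
      · exact not_le.mp fun h => ht ⟨htK, h⟩
      · exact hfK htK
    have hgt := hg0 t
    positivity

namespace Polynomial

theorem eventually_cocompact_eval_pos_of_even {p : ℝ[X]} (heven : Even p.natDegree)
    (hlc : 0 < p.leadingCoeff) : ∀ᶠ t in cocompact ℝ, 0 < p.eval t := by
  have hlead {l : Filter ℝ} (hl : ∀ᶠ t in l, t ≠ 0) :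
      ∀ᶠ t in l, 0 < p.leadingCoeff * t ^ p.natDegree :=
    hl.mono fun t ht => mul_pos hlc (heven.pow_pos ht)
  rw [cocompact_eq_atBot_atTop]
  exact eventually_sup.mpr
    ⟨p.isEquivalent_atBot_lead.eventually_pos (hlead (eventually_ne_atBot 0)),
     p.isEquivalent_atTop_lead.eventually_pos (hlead (eventually_ne_atTop 0))⟩

theorem natDegree_add_C_mul_eq_and_leadingCoeff_pos {R : Type*} [CommRing R] [LinearOrder R]
    [IsStrictOrderedRing R] {p g : R[X]} (hdeg : p.natDegree ≤ g.natDegree) {c : R}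
    (hc : -p.coeff g.natDegree < c * g.leadingCoeff) :
    (p + C c * g).natDegree = g.natDegree ∧ 0 < (p + C c * g).leadingCoeff := by
  have hcoeff : 0 < (p + C c * g).coeff g.natDegree := by
    rw [coeff_add, coeff_C_mul, coeff_natDegree]
    linarith
  have hnat : (p + C c * g).natDegree = g.natDegree :=
    le_antisymm (natDegree_add_le_of_degree_le hdeg (natDegree_C_mul_le _ _))
      (le_natDegree_of_ne_zero hcoeff.ne')
  exact ⟨hnat, by rwa [leadingCoeff, hnat]⟩

theorem exists_pos_add_C_mul_pos {p g : ℝ[X]} (hg0 : ∀ t, 0 ≤ g.eval t)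
    (hglc : 0 < g.leadingCoeff) (heven : Even g.natDegree) (hdeg : p.natDegree ≤ g.natDegree)
    (hpg : ∀ t, g.eval t = 0 → 0 < p.eval t) :
    ∃ c, 0 < c ∧ (∀ t, 0 < (p + C c * g).eval t) ∧
      (p + C c * g).natDegree = g.natDegree := by
  set c₀ := (|p.coeff g.natDegree| + 1) / g.leadingCoeff
  have hlead : ∀ c, c₀ ≤ c → -p.coeff g.natDegree < c * g.leadingCoeff := fun c hc =>
    calc -p.coeff g.natDegree < |p.coeff g.natDegree| + 1 := by
          linarith [neg_le_abs (p.coeff g.natDegree)]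
      _ = c₀ * g.leadingCoeff := (div_mul_cancel₀ _ hglc.ne').symm
      _ ≤ c * g.leadingCoeff := mul_le_mul_of_nonneg_right hc hglc.le
  obtain ⟨hdeg₀, hlc₀⟩ :=
    natDegree_add_C_mul_eq_and_leadingCoeff_pos hdeg (hlead c₀ le_rfl)
  obtain ⟨c₁, hc₁, hpos⟩ := exists_nonneg_add_mul_pos_of_eventually_pos
    (p + C c₀ * g).continuous g.continuous hg0 (fun t ht => by simpa [ht] using hpg t ht)
    (eventually_cocompact_eval_pos_of_even (hdeg₀ ▸ heven) hlc₀)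
  refine ⟨c₀ + c₁, by positivity, fun t => ?_,
    (natDegree_add_C_mul_eq_and_leadingCoeff_pos hdeg (hlead _ (le_add_of_nonneg_right hc₁))).1⟩
  have hpost := hpos t
  simp only [eval_add, eval_mul, eval_C] at hpost ⊢
  linarith

end Polynomial

theorem exists_pos_eta_mul_add_sq_pos {x y : ℝ[X]} (hx : x ≠ 0) (hy : y ≠ 0)
    (hdeg : x.natDegree = y.natDegree) (hpos : ∀ z, y.eval z = 0 → 0 < x.eval z) :
    ∃ η : ℝ[X], (∀ t, 0 < η.eval t) ∧ (∀ t, 0 < (x * η + y ^ 2).eval t) ∧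
      y.natDegree - 1 ≤ η.natDegree ∧ η.natDegree ≤ y.natDegree ∧
      (x * η + y ^ 2).natDegree = 2 * y.natDegree := by
  set n := y.natDegree
  set q : ℝ[X] := (X ^ 2 + 1) ^ (n / 2)
  have hq : ∀ t, 0 < q.eval t := fun t => by
    simp only [q, eval_pow, eval_add, eval_X, eval_one]
    positivity
  have hq0 : q ≠ 0 := fun h => by simpa [h] using hq 0
  have hqdeg : q.natDegree = 2 * (n / 2) := by
    rw [natDegree_pow, ← C_1, natDegree_X_pow_add_C, mul_comm]
  have hy2 : (y ^ 2).natDegree = 2 * n := natDegree_pow y 2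
  obtain ⟨c, hc, hδ, hδdeg⟩ := exists_pos_add_C_mul_pos (p := x * q) (g := y ^ 2)
    (fun t => by rw [eval_pow]; positivity)
    (by have := leadingCoeff_ne_zero.mpr hy; rw [leadingCoeff_pow]; positivity)
    (hy2 ▸ even_two_mul n)
    (by rw [natDegree_mul hx hq0, hqdeg, hy2, hdeg]; omega)
    (fun z hz => by rw [eval_mul]; exact mul_pos (hpos z (by simpa using hz)) (hq z))
  have hη : x * (C c⁻¹ * q) + y ^ 2 = C c⁻¹ * (x * q + C c * y ^ 2) := by
    rw [mul_add, ← mul_assoc (C c⁻¹) (C c), ← C_mul, inv_mul_cancel₀ hc.ne', C_1, one_mul]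
    ring
  have hηdeg : (C c⁻¹ * q).natDegree = 2 * (n / 2) := by
    rw [natDegree_C_mul (inv_ne_zero hc.ne'), hqdeg]
  refine ⟨C c⁻¹ * q, fun t => ?_, fun t => ?_, by omega, by omega, ?_⟩
  · rw [eval_mul, eval_C]; exact mul_pos (inv_pos.mpr hc) (hq t)
  · rw [hη, eval_mul, eval_C]; exact mul_pos (inv_pos.mpr hc) (hδ t)
  · rw [hη, natDegree_C_mul (inv_ne_zero hc.ne'), hδdeg, hy2]

/-- If `x, y` are nonzero real polynomials of equal degree and `x` has
constant sign on the real roots of `y`, then there is a real polynomial `η` without real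
roots such that `δ = x·η + y²` is everywhere positive, with
`deg y − 1 ≤ deg η ≤ deg y` and `deg δ = 2·deg y`. -/
theorem exists_eta_mul_add_sq_pos (x y : Polynomial ℝ) (hx : x ≠ 0) (hy : y ≠ 0)
    (hdeg : x.natDegree = y.natDegree)
    (hsign : (∀ z : ℝ, y.eval z = 0 → 0 < x.eval z) ∨
             (∀ z : ℝ, y.eval z = 0 → x.eval z < 0)) :
    ∃ η : Polynomial ℝ, (∀ t : ℝ, η.eval t ≠ 0) ∧
      (∀ t : ℝ, 0 < (x * η + y ^ 2).eval t) ∧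
      y.natDegree - 1 ≤ η.natDegree ∧ η.natDegree ≤ y.natDegree ∧
      (x * η + y ^ 2).natDegree = 2 * y.natDegree := by
  rcases hsign with hpos | hneg
  · obtain ⟨η, hη, hrest⟩ := exists_pos_eta_mul_add_sq_pos hx hy hdeg hpos
    exact ⟨η, fun t => (hη t).ne', hrest⟩
  · obtain ⟨η, hη, hδ, hlow, hup, hδdeg⟩ :=
      exists_pos_eta_mul_add_sq_pos (neg_ne_zero.mpr hx) hy (by rwa [natDegree_neg])
        (fun z hz => by simpa using hneg z hz)
    have hflip : x * -η = -x * η := by rw [mul_neg, neg_mul]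
    refine ⟨-η, fun t => by simpa using (hη t).ne', hflip ▸ hδ, ?_, ?_, hflip ▸ hδdeg⟩
    · rw [natDegree_neg]; exact hlow
    · rw [natDegree_neg]; exact hup
end
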